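/- arXiv:2009.10713 — 7 statements merged into one kernel-verified Lean document; each statement's English description precedes it below -/
import Mathlib

section
/- Let π₀ be a probability measure on a measurable space Ω, let φ : [0,1]^d × Ω → ℝ be jointly measurable with |φ(x; w)| ≤ 1 for all x and w, and let P be a probability measure on [0,1]^d. Suppose f(x) = ∫_Ω a(w) φ(x; w) dπ₀(w) for all x ∈ [0,1]^d, where a ∈ L²(π₀). If w₁, …, w_m are i.i.d. samples from π₀ and f_m(x) = (1/m) Σ_{j=1}^m a(w_j) φ(x; w_j), then E_{w₁,…,w_m}[ ‖f_m − f‖²_{L²(P)} ] ≤ (∫_Ω a(w)² dπ₀(w)) / m. -/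
/-!
For fixed `x`, the model value `f_m(x)` is the empirical mean of `m` i.i.d. copies of
`w ↦ a(w) φ(x; w)`, whose expectation is `f(x)`. Its mean squared error is therefore the variance of
one copy divided by `m`, which is at most `∫ a² dπ₀ / m` since `|φ| ≤ 1`. Integrating over `x` and
exchanging the two integrals (Tonelli: the integrand is nonnegative) gives the theorem.
-/

open MeasureTheory ProbabilityTheory

noncomputable def empiricalMean {Ω : Type*} (m : ℕ) (g : Ω → ℝ) : (Fin m → Ω) → ℝ :=
  fun W => (1 / m) * ∑ j, g (W j)

lemma Measurable.empiricalMean {X Ω : Type*} [MeasurableSpace X] [MeasurableSpace Ω]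
    {G : X → Ω → ℝ} (hG : Measurable (Function.uncurry G)) (m : ℕ) :
    Measurable fun p : (Fin m → Ω) × X => empiricalMean m (G p.2) p.1 := by
  unfold _root_.empiricalMean
  fun_prop

section EmpiricalMean

variable {Ω : Type*} [MeasurableSpace Ω] {μ : Measure Ω} [IsProbabilityMeasure μ] {g : Ω → ℝ}
  {m : ℕ}

lemma integral_empiricalMean (hg : Integrable g μ) (hm : m ≠ 0) :
    ∫ W, empiricalMean m g W ∂Measure.pi (fun _ => μ) = ∫ w, g w ∂μ := by
  simp only [empiricalMean]
  rw [integral_const_mul, integral_finsetSum _ fun j _ => integrable_comp_eval hg]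
  simp only [integral_comp_eval (μ := fun _ => μ) hg.aestronglyMeasurable, Finset.sum_const,
    Finset.card_univ, Fintype.card_fin, nsmul_eq_mul]
  field_simp

lemma memLp_empiricalMean (hg : MemLp g 2 μ) :
    MemLp (empiricalMean m g) 2 (Measure.pi fun _ => μ) := by
  have := (memLp_finsetSum' (Finset.univ : Finset (Fin m)) fun j _ =>
    hg.comp_measurePreserving (measurePreserving_eval (fun _ => μ) j)).const_mul (1 / m : ℝ)
  convert this using 1
  ext W
  simp [empiricalMean]

lemma variance_empiricalMean (hg : MemLp g 2 μ) :
    Var[empiricalMean m g; Measure.pi fun _ => μ] = Var[g; μ] / m := by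
  have hsum : (fun W : Fin m → Ω => ∑ j, g (W j)) = ∑ j, fun W => g (W j) := by
    ext W; simp
  unfold empiricalMean
  rw [variance_const_mul, hsum, variance_sum_pi fun _ => hg]
  obtain rfl | hm := eq_or_ne m 0
  · simp
  · simp only [Finset.sum_const, Finset.card_univ, Fintype.card_fin, nsmul_eq_mul]
    field_simp

lemma integral_empiricalMean_sub_sq_le (hg : MemLp g 2 μ) (hm : m ≠ 0) :
    ∫ W, (empiricalMean m g W - ∫ w, g w ∂μ) ^ 2 ∂Measure.pi (fun _ => μ)
      ≤ (∫ w, g w ^ 2 ∂μ) / m := by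
  rw [← integral_empiricalMean (hg.integrable one_le_two) hm,
    ← variance_eq_integral (memLp_empiricalMean hg).aestronglyMeasurable.aemeasurable,
    variance_empiricalMean hg]
  exact div_le_div_of_nonneg_right (variance_le_expectation_sq hg.aestronglyMeasurable)
    m.cast_nonneg

end EmpiricalMean

lemma integral_integral_le_of_ae_integral_le {α β : Type*} [MeasurableSpace α]
    [MeasurableSpace β] {μ : Measure α} {ν : Measure β} [SFinite μ] [IsProbabilityMeasure ν]
    {q : α → β → ℝ} {B : ℝ} (hq : AEMeasurable (Function.uncurry q) (μ.prod ν))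
    (hq_nonneg : ∀ a b, 0 ≤ q a b) (hq_int : ∀ᵐ b ∂ν, Integrable (fun a => q a b) μ)
    (hB : ∀ᵐ b ∂ν, ∫ a, q a b ∂μ ≤ B) :
    ∫ a, ∫ b, q a b ∂ν ∂μ ≤ B := by
  -- Passing to lower integrals, no integrability of `uncurry q` is needed for the swap.
  have hB_nonneg : 0 ≤ B := by
    obtain ⟨b, hb⟩ := hB.exists
    exact (integral_nonneg fun a => hq_nonneg a b).trans hb
  rw [integral_eq_lintegral_of_nonneg_ae (ae_of_all _ fun a => integral_nonneg (hq_nonneg a))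
    hq.aestronglyMeasurable.integral_prod_right']
  refine ENNReal.toReal_le_of_le_ofReal hB_nonneg ?_
  calc ∫⁻ a, ENNReal.ofReal (∫ b, q a b ∂ν) ∂μ
      ≤ ∫⁻ a, ∫⁻ b, ENNReal.ofReal (q a b) ∂ν ∂μ := by
        refine lintegral_mono fun a => (Real.ofReal_le_enorm _).trans ?_
        refine (enorm_integral_le_lintegral_enorm _).trans_eq ?_
        simp only [Real.enorm_of_nonneg (hq_nonneg a _)]
    _ = ∫⁻ b, ∫⁻ a, ENNReal.ofReal (q a b) ∂μ ∂ν :=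
        lintegral_lintegral_swap hq.ennreal_ofReal
    _ = ∫⁻ b, ENNReal.ofReal (∫ a, q a b ∂μ) ∂ν := by
        refine lintegral_congr_ae (hq_int.mono fun b hb => ?_)
        exact (ofReal_integral_eq_lintegral_ofReal hb (ae_of_all _ fun a => hq_nonneg a b)).symm
    _ ≤ ∫⁻ _, ENNReal.ofReal B ∂ν :=
        lintegral_mono_ae (hB.mono fun b hb => ENNReal.ofReal_le_ofReal hb)
    _ = ENNReal.ofReal B := by simp

section BoundedFactor

variable {Ω : Type*} [MeasurableSpace Ω] {μ : Measure Ω} {a ψ : Ω → ℝ}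

lemma memLp_mul_of_abs_le_one (ha : MemLp a 2 μ) (hψ : AEStronglyMeasurable ψ μ)
    (hψ_le : ∀ w, |ψ w| ≤ 1) : MemLp (fun w => a w * ψ w) 2 μ :=
  ha.of_le (ha.aestronglyMeasurable.mul hψ) (ae_of_all _ fun w => by
    simpa [abs_mul] using mul_le_of_le_one_right (abs_nonneg (a w)) (hψ_le w))

lemma integral_mul_sq_le_of_abs_le_one (ha : MemLp a 2 μ) (hψ : AEStronglyMeasurable ψ μ)
    (hψ_le : ∀ w, |ψ w| ≤ 1) : ∫ w, (a w * ψ w) ^ 2 ∂μ ≤ ∫ w, a w ^ 2 ∂μ :=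
  integral_mono (memLp_mul_of_abs_le_one ha hψ hψ_le).integrable_sq ha.integrable_sq fun w => by
    rw [mul_pow]
    exact mul_le_of_le_one_right (sq_nonneg _) ((sq_le_one_iff_abs_le_one _).mpr (hψ_le w))

end BoundedFactor

/-- Direct approximation theorem for the random feature model: if
`f(x) = ∫ a(w) φ(x;w) dπ₀(w)` with `a ∈ L²(π₀)` and `|φ| ≤ 1`, then the expected
`L²(P)` error of the `m`-feature model with i.i.d. features is at most `(∫ a² dπ₀)/m`. -/
theorem random_feature_direct_approximation
    (d : ℕ) {Ω : Type*} [MeasurableSpace Ω] (π₀ : Measure Ω) [IsProbabilityMeasure π₀]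
    (φ : (Fin d → ℝ) → Ω → ℝ)
    (hφmeas : Measurable (fun p : (Fin d → ℝ) × Ω => φ p.1 p.2))
    (hφbdd : ∀ x w, |φ x w| ≤ 1)
    (P : Measure (Fin d → ℝ)) [IsProbabilityMeasure P]
    (hP : P (Set.Icc (0 : Fin d → ℝ) 1) = 1)
    (a : Ω → ℝ) (hameas : Measurable a) (haL2 : MemLp a 2 π₀)
    (f : (Fin d → ℝ) → ℝ)
    (hf : ∀ x ∈ Set.Icc (0 : Fin d → ℝ) 1, f x = ∫ w, a w * φ x w ∂π₀)
    (m : ℕ) (hm : 0 < m) :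
    (∫ W : Fin m → Ω,
        (∫ x, ((1 / m) * ∑ j, a (W j) * φ x (W j) - f x) ^ 2 ∂P)
      ∂(Measure.pi fun _ : Fin m => π₀))
      ≤ (∫ w, (a w) ^ 2 ∂π₀) / m := by
  set g : (Fin d → ℝ) → Ω → ℝ := fun x w => a w * φ x w
  have hg_meas : Measurable (Function.uncurry g) := (hameas.comp measurable_snd).mul hφmeas
  have hφ_meas : ∀ x, AEStronglyMeasurable (φ x) π₀ := fun x =>
    (hφmeas.comp measurable_prodMk_left).aestronglyMeasurable
  have hg_memLp : ∀ x, MemLp (g x) 2 π₀ := fun x =>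
    memLp_mul_of_abs_le_one haL2 (hφ_meas x) (hφbdd x)
  have hIcc : ∀ᵐ x ∂P, x ∈ Set.Icc (0 : Fin d → ℝ) 1 :=
    (mem_ae_iff_prob_eq_one measurableSet_Icc).mpr hP
  calc _ = ∫ W, ∫ x, (empiricalMean m (g x) W - ∫ w, g x w ∂π₀) ^ 2 ∂P
          ∂Measure.pi fun _ => π₀ :=
        integral_congr_ae (ae_of_all _ fun W =>
          integral_congr_ae (hIcc.mono fun x hx => by rw [hf x hx]; rfl))
    _ ≤ (∫ w, a w ^ 2 ∂π₀) / m := by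
      refine integral_integral_le_of_ae_integral_le ?_ (fun _ _ => sq_nonneg _)
        (ae_of_all _ fun x =>
          ((memLp_empiricalMean (hg_memLp x)).sub (memLp_const _)).integrable_sq)
        (ae_of_all _ fun x => (integral_empiricalMean_sub_sq_le (hg_memLp x) hm.ne').trans
          (div_le_div_of_nonneg_right
            (integral_mul_sq_le_of_abs_le_one haL2 (hφ_meas x) (hφbdd x)) m.cast_nonneg))
      have hF_meas : Measurable fun x => ∫ w, g x w ∂π₀ :=
        hg_meas.stronglyMeasurable.integral_prod_right'.measurable
      exact ((hg_meas.empiricalMean m).sub (hF_meas.comp measurable_snd)).pow_const 2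
        |>.aemeasurable
end

section
/- Let σ(z) = max(z,0) be the ReLU activation and, for x ∈ [0,1]^d, write x̃ = (xᵀ,1)ᵀ ∈ ℝ^{d+1}. For 1 ≤ p ≤ ∞ and a function f : [0,1]^d → ℝ, define ‖f‖_{𝓑_p} = inf_ρ ( ∫ |a|^p ‖w‖₁^p dρ(a,w) )^{1/p} (with the essential supremum of |a|‖w‖₁ when p = ∞), where the infimum is over all probability measures ρ on ℝ × ℝ^{d+1} such that f(x) = ∫ a σ(wᵀ x̃) dρ(a,w) for all x ∈ [0,1]^d. Then for every f admitting at least one such representation and all 1 ≤ p ≤ q ≤ ∞, one has ‖f‖_{𝓑_p} = ‖f‖_{𝓑_q}. -/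
/-!
By positive homogeneity of the ReLU, a neuron `(a, w)` contributes the same as the neuron
`(Z sign a, w / ‖w‖₁)` taken with weight `|a| ‖w‖₁ / Z`. Choosing `Z = ‖a ‖w‖₁‖_{L¹(ρ)}`, reweighting
`ρ` by that density and pushing it forward along this rescaling gives a new probability measure
representing the same function, on which `|a| ‖w‖₁ ≤ Z` everywhere. Hence the `𝓑_∞` norm is at most
the `𝓑_1` norm, and the reverse inequalities are monotonicity of `L^p` norms for probability
measures.
-/

open MeasureTheory ProbabilityTheory ENNReal

/-- `x̃ = (xᵀ, 1)ᵀ ∈ ℝ^{d+1}` for `x ∈ ℝ^d`. -/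
def tilde {d : ℕ} (x : Fin d → ℝ) : Fin (d + 1) → ℝ := Fin.snoc x 1

/-- The set of probability measures `ρ` on `ℝ × ℝ^{d+1}` representing
`f(x) = ∫ a σ(wᵀ x̃) dρ(a,w)` on `[0,1]^d`, where `σ` is the ReLU. -/
def barronReps (d : ℕ) (f : (Fin d → ℝ) → ℝ) :
    Set (Measure (ℝ × (Fin (d + 1) → ℝ))) :=
  {ρ | IsProbabilityMeasure ρ ∧
    ∀ x ∈ Set.Icc (0 : Fin d → ℝ) 1,
      f x = ∫ p, p.1 * max (∑ i, p.2 i * tilde x i) 0 ∂ρ}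

/-- The `p`-Barron norm: `inf_ρ ‖ a‖w‖₁ ‖_{L^p(ρ)}` over representing measures `ρ`
(with the essential supremum when `p = ∞`). -/
noncomputable def barronNorm (p : ℝ≥0∞) (d : ℕ) (f : (Fin d → ℝ) → ℝ) : ℝ≥0∞ :=
  ⨅ ρ ∈ barronReps d f, eLpNorm (fun q : ℝ × (Fin (d + 1) → ℝ) => q.1 * ∑ i, |q.2 i|) p ρ

open scoped NNReal

theorem integral_map_withDensity_eq {α β E : Type*} [MeasurableSpace α] [MeasurableSpace β]
    [NormedAddCommGroup E] [NormedSpace ℝ E] {μ : Measure α} {h : α → ℝ≥0} (hh : Measurable h)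
    {T : α → β} (hT : Measurable T) {φ : β → E} (hφ : StronglyMeasurable φ) {ψ : α → E}
    (hψ : ∀ a, h a • φ (T a) = ψ a) :
    ∫ b, φ b ∂(μ.withDensity fun a => h a).map T = ∫ a, ψ a ∂μ := by
  rw [integral_map hT.aemeasurable hφ.aestronglyMeasurable,
    integral_withDensity_eq_integral_smul hh]
  simp_rw [hψ]

section Rescaling

variable {ι : Type*} [Fintype ι]

def neuron (v : ι → ℝ) (θ : ℝ × (ι → ℝ)) : ℝ := θ.1 * max (∑ i, θ.2 i * v i) 0

def barronWeight (θ : ℝ × (ι → ℝ)) : ℝ := θ.1 * ∑ i, |θ.2 i|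

-- At `a = 0` or `w = 0` the junk values `sign 0 = 0` and `0⁻¹ = 0` give a neuron of weight `0`.
noncomputable def rescale (c : ℝ) (θ : ℝ × (ι → ℝ)) : ℝ × (ι → ℝ) :=
  (c * SignType.sign θ.1, (∑ i, |θ.2 i|)⁻¹ • θ.2)

theorem continuous_neuron (v : ι → ℝ) : Continuous (neuron v) := by
  unfold neuron; fun_prop

theorem continuous_barronWeight : Continuous (barronWeight (ι := ι)) := by
  unfold barronWeight; fun_prop

theorem measurable_rescale (c : ℝ) : Measurable (rescale (ι := ι) c) := by
  have hsign : Measurable fun a : ℝ => (SignType.sign a : ℝ) :=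
    Monotone.measurable fun a b hab => by
      simp only [sign_apply]
      split_ifs <;> norm_num <;> linarith
  exact (measurable_const.mul (hsign.comp measurable_fst)).prodMk (by fun_prop)

theorem neuron_eq_zero_of_barronWeight_eq_zero {θ : ℝ × (ι → ℝ)} (h : barronWeight θ = 0)
    (v : ι → ℝ) : neuron v θ = 0 := by
  rcases mul_eq_zero.mp h with ha | hw
  · simp [neuron, ha]
  · have hw : θ.2 = 0 := funext fun i => abs_eq_zero.mp <|
      (Finset.sum_eq_zero_iff_of_nonneg fun i _ => abs_nonneg _).mp hw i (Finset.mem_univ i)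
    simp [neuron, hw]

theorem abs_barronWeight_rescale_le (c : ℝ) (θ : ℝ × (ι → ℝ)) :
    |barronWeight (rescale c θ)| ≤ |c| := by
  set S := ∑ i, |θ.2 i|
  have hS : S⁻¹ * S ≤ 1 := by
    rcases eq_or_ne S 0 with h | h
    · simp [h]
    · rw [inv_mul_cancel₀ h]
  have hsign : |(SignType.sign θ.1 : ℝ)| ≤ 1 := by
    rcases lt_trichotomy θ.1 0 with h | h | h <;> simp [h]
  have hnorm : ∑ i, |(rescale c θ).2 i| = S⁻¹ * S := by
    simp only [rescale, Pi.smul_apply, smul_eq_mul, abs_mul, abs_inv, ← Finset.mul_sum, S,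
      abs_of_nonneg (Finset.sum_nonneg fun i _ => abs_nonneg (θ.2 i))]
  rw [barronWeight, hnorm, abs_mul, abs_of_nonneg (by positivity : 0 ≤ S⁻¹ * S)]
  simp only [rescale, abs_mul]
  calc |c| * |(SignType.sign θ.1 : ℝ)| * (S⁻¹ * S) ≤ |c| * 1 * 1 := by gcongr
    _ = |c| := by ring

theorem abs_barronWeight_div_mul_neuron_rescale {c : ℝ} (hc : c ≠ 0) (v : ι → ℝ)
    (θ : ℝ × (ι → ℝ)) : |barronWeight θ| / c * neuron v (rescale c θ) = neuron v θ := by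
  set S := ∑ i, |θ.2 i|
  rcases eq_or_ne S 0 with hS | hS
  · have h0 : barronWeight θ = 0 := by simp [barronWeight, S, hS]
    rw [h0, neuron_eq_zero_of_barronWeight_eq_zero h0, abs_zero, zero_div, zero_mul]
  have hS_pos : 0 < S := (Finset.sum_nonneg fun i _ => abs_nonneg (θ.2 i)).lt_of_ne' hS
  have hmax : max (∑ i, (S⁻¹ • θ.2) i * v i) 0 = S⁻¹ * max (∑ i, θ.2 i * v i) 0 := by
    simp only [Pi.smul_apply, smul_eq_mul, mul_assoc, ← Finset.mul_sum]
    rw [mul_max_of_nonneg _ _ (inv_nonneg.mpr hS_pos.le), mul_zero]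
  rw [neuron, rescale, hmax, barronWeight, abs_mul, abs_of_pos hS_pos]
  calc |θ.1| * S / c * (c * SignType.sign θ.1 * (S⁻¹ * max (∑ i, θ.2 i * v i) 0))
      = (SignType.sign θ.1 * |θ.1|) * (S * S⁻¹) * (c / c) * max (∑ i, θ.2 i * v i) 0 := by ring
    _ = θ.1 * max (∑ i, θ.2 i * v i) 0 := by
      rw [sign_mul_abs, mul_inv_cancel₀ hS, div_self hc, mul_one, mul_one]

noncomputable def normalizedRep (ρ : Measure (ℝ × (ι → ℝ))) : Measure (ℝ × (ι → ℝ)) :=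
  let Z := (eLpNorm barronWeight 1 ρ).toNNReal
  (ρ.withDensity fun θ => (‖barronWeight θ‖₊ / Z : ℝ≥0)).map (rescale Z)

variable {ρ : Measure (ℝ × (ι → ℝ))}

theorem isProbabilityMeasure_normalizedRep (h0 : eLpNorm barronWeight 1 ρ ≠ 0)
    (htop : eLpNorm barronWeight 1 ρ ≠ ∞) : IsProbabilityMeasure (normalizedRep ρ) := by
  have hZ : (eLpNorm barronWeight 1 ρ).toNNReal ≠ 0 := (toNNReal_pos h0 htop).ne'
  have : IsProbabilityMeasure (ρ.withDensity fun θ =>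
      (‖barronWeight θ‖₊ / (eLpNorm barronWeight 1 ρ).toNNReal : ℝ≥0)) := by
    constructor
    simp_rw [withDensity_apply _ MeasurableSet.univ, setLIntegral_univ, ENNReal.coe_div hZ,
      div_eq_mul_inv, ← enorm_eq_nnnorm]
    rw [lintegral_mul_const' _ _ (inv_ne_top.mpr (coe_ne_zero.mpr hZ)), coe_toNNReal htop,
      ← eLpNorm_one_eq_lintegral_enorm, ENNReal.mul_inv_cancel h0 htop]
  exact Measure.isProbabilityMeasure_map (measurable_rescale _).aemeasurable

theorem integral_neuron_normalizedRep (h0 : eLpNorm barronWeight 1 ρ ≠ 0)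
    (htop : eLpNorm barronWeight 1 ρ ≠ ∞) (v : ι → ℝ) :
    ∫ θ, neuron v θ ∂normalizedRep ρ = ∫ θ, neuron v θ ∂ρ := by
  have hZ : ((eLpNorm barronWeight 1 ρ).toNNReal : ℝ) ≠ 0 :=
    NNReal.coe_ne_zero.mpr (toNNReal_pos h0 htop).ne'
  refine integral_map_withDensity_eq (continuous_barronWeight.measurable.nnnorm.div_const _)
    (measurable_rescale _) (continuous_neuron v).stronglyMeasurable fun θ => ?_
  rw [NNReal.smul_def, NNReal.coe_div, coe_nnnorm, Real.norm_eq_abs, smul_eq_mul]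
  exact abs_barronWeight_div_mul_neuron_rescale hZ v θ

theorem eLpNorm_top_normalizedRep_le :
    eLpNorm barronWeight ∞ (normalizedRep ρ) ≤ eLpNorm barronWeight 1 ρ := by
  rw [normalizedRep, eLpNorm_map_measure continuous_barronWeight.aestronglyMeasurable
    (measurable_rescale _).aemeasurable, eLpNorm_exponent_top]
  refine (eLpNormEssSup_le_of_ae_nnnorm_bound (ae_of_all _ fun θ => ?_)).trans
    coe_toNNReal_le_self
  rw [← NNReal.coe_le_coe, coe_nnnorm, Real.norm_eq_abs]
  simpa using abs_barronWeight_rescale_le ((eLpNorm barronWeight 1 ρ).toNNReal : ℝ) θ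

end Rescaling

variable {d : ℕ} {f : (Fin d → ℝ) → ℝ} {ρ : Measure (ℝ × (Fin (d + 1) → ℝ))}

theorem normalizedRep_mem_barronReps (hρ : ρ ∈ barronReps d f)
    (h0 : eLpNorm barronWeight 1 ρ ≠ 0) (htop : eLpNorm barronWeight 1 ρ ≠ ∞) :
    normalizedRep ρ ∈ barronReps d f :=
  ⟨isProbabilityMeasure_normalizedRep h0 htop, fun x hx =>
    (hρ.2 x hx).trans (integral_neuron_normalizedRep h0 htop (tilde x)).symm⟩

theorem dirac_zero_mem_barronReps (hρ : ρ ∈ barronReps d f)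
    (h0 : eLpNorm barronWeight 1 ρ = 0) : Measure.dirac 0 ∈ barronReps d f := by
  have hweight : barronWeight =ᵐ[ρ] 0 :=
    (eLpNorm_eq_zero_iff continuous_barronWeight.aestronglyMeasurable one_ne_zero).mp h0
  refine ⟨inferInstance, fun x hx => ?_⟩
  rw [hρ.2 x hx, integral_dirac]
  change ∫ θ, neuron (tilde x) θ ∂ρ = neuron (tilde x) 0
  rw [integral_eq_zero_of_ae
    (hweight.mono fun θ hθ => neuron_eq_zero_of_barronWeight_eq_zero hθ _)]
  simp [neuron]

theorem exists_mem_barronReps_eLpNorm_top_le (hρ : ρ ∈ barronReps d f) :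
    ∃ ρ' ∈ barronReps d f, eLpNorm barronWeight ∞ ρ' ≤ eLpNorm barronWeight 1 ρ := by
  by_cases htop : eLpNorm barronWeight 1 ρ = ∞
  · exact ⟨ρ, hρ, htop.symm ▸ le_top⟩
  by_cases h0 : eLpNorm barronWeight 1 ρ = 0
  · refine ⟨_, dirac_zero_mem_barronReps hρ h0, ?_⟩
    rw [h0, nonpos_iff_eq_zero,
      eLpNorm_eq_zero_iff continuous_barronWeight.aestronglyMeasurable (by simp)]
    simp [barronWeight, Filter.EventuallyEq, ae_dirac_eq]
  · exact ⟨_, normalizedRep_mem_barronReps hρ h0 htop, eLpNorm_top_normalizedRep_le⟩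

theorem barronNorm_mono {p q : ℝ≥0∞} (hpq : p ≤ q) : barronNorm p d f ≤ barronNorm q d f :=
  iInf₂_mono fun _ hρ =>
    have := hρ.1
    eLpNorm_le_eLpNorm_of_exponent_le hpq continuous_barronWeight.aestronglyMeasurable

theorem barronNorm_top_le_one : barronNorm ∞ d f ≤ barronNorm 1 d f :=
  le_iInf₂ fun _ hρ =>
    let ⟨ρ', hρ', hle⟩ := exists_mem_barronReps_eLpNorm_top_le hρ
    iInf₂_le_of_le ρ' hρ' hle

theorem barronNorm_eq_of_le_general (d : ℕ) (f : (Fin d → ℝ) → ℝ)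
    (p q : ℝ≥0∞) (hp : 1 ≤ p) (hpq : p ≤ q) :
    barronNorm p d f = barronNorm q d f :=
  (barronNorm_mono hpq).antisymm <|
    (barronNorm_mono le_top).trans <| barronNorm_top_le_one.trans (barronNorm_mono hp)

/-- For the ReLU activation, all `p`-Barron norms coincide: for every `f` admitting at
least one representing measure and all `1 ≤ p ≤ q ≤ ∞`, `‖f‖_{𝓑_p} = ‖f‖_{𝓑_q}`. -/
theorem barronNorm_eq_of_le (d : ℕ) (f : (Fin d → ℝ) → ℝ)
    (hf : (barronReps d f).Nonempty)
    (p q : ℝ≥0∞) (hp : 1 ≤ p) (hpq : p ≤ q) :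
    barronNorm p d f = barronNorm q d f :=
  barronNorm_eq_of_le_general d f p q hp hpq
end

section
/- Let σ(z) = max(z,0) be the ReLU activation and, for x ∈ [0,1]^d, write x̃ = (xᵀ,1)ᵀ ∈ ℝ^{d+1}. Fix C > 0 and let 𝓝_C be the set of all finite two-layer ReLU networks x ↦ (1/m) Σ_{j=1}^m a_j σ(w_jᵀ x̃) (m ∈ ℕ, a_j ∈ ℝ, w_j ∈ ℝ^{d+1}) whose path norm satisfies (1/m) Σ_{j=1}^m |a_j| ‖w_j‖₁ ≤ C. Suppose f* : [0,1]^d → ℝ is continuous and there is a sequence f_m ∈ 𝓝_C with f_m(x) → f*(x) for every x ∈ [0,1]^d. Then there exists a probability measure ρ* on ℝ × ℝ^{d+1} such that f*(x) = ∫ a σ(wᵀ x̃) dρ*(a,w) for all x ∈ [0,1]^d and ∫ |a| ‖w‖₁ dρ*(a,w) ≤ C. -/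
/-!
A ReLU neuron is positively homogeneous in its inner weights, so the neuron `(a, w)` of a network
equals `|a| ‖w‖₁ / C` times the neuron `(C sign a, w / ‖w‖₁)`, whose parameters lie in the compact
set `|a| ≤ C`, `‖w‖₁ ≤ 1`. Since the path norm is at most `C`, these weights (divided by `m`) have
total mass at most one, and putting the remaining mass on the zero neuron turns each network into
the integral of the neuron against a probability measure on that compact set. Probability measures
on a compact metrizable space form a compact metrizable space, so a subsequence converges weakly;
each neuron is a bounded continuous function of the parameters there, so the integrals converge and
the limit measure represents `f*`.
-/

open MeasureTheory

open Filter Topology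

theorem exists_probabilityMeasure_integral_eq_sum_dirac {X ι : Type*} [MeasurableSpace X]
    [MeasurableSingletonClass X] [Fintype ι] {c : ι → ℝ} (hc : ∀ i, 0 ≤ c i)
    (hsum : ∑ i, c i ≤ 1) (x : ι → X) (x₀ : X) :
    ∃ μ : ProbabilityMeasure X, ∀ f : X → ℝ,
      ∫ y, f y ∂μ = ∑ i, c i * f (x i) + (1 - ∑ i, c i) * f x₀ := by
  set μ : Measure X := ∑ i, ENNReal.ofReal (c i) • Measure.dirac (x i) +
    ENNReal.ofReal (1 - ∑ i, c i) • Measure.dirac x₀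
  have hμ : IsProbabilityMeasure μ := by
    constructor
    simp only [μ, Measure.add_apply, Measure.coe_finsetSum, Finset.sum_apply, Measure.smul_apply,
      measure_univ, smul_eq_mul, mul_one]
    rw [← ENNReal.ofReal_sum_of_nonneg fun i _ => hc i,
      ← ENNReal.ofReal_add (Finset.sum_nonneg fun i _ => hc i) (sub_nonneg.2 hsum)]
    simp
  refine ⟨⟨μ, hμ⟩, fun f => ?_⟩
  have hdirac : ∀ (r : ℝ) (y : X), Integrable f (ENNReal.ofReal r • Measure.dirac y) :=
    fun r y => (integrable_dirac (by simp)).smul_measure ENNReal.ofReal_ne_top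
  have hdirac_integral : ∀ (r : ℝ) (y : X), 0 ≤ r →
      ∫ u, f u ∂(ENNReal.ofReal r • Measure.dirac y) = r * f y :=
    fun r y hr => by
      rw [integral_smul_measure, integral_dirac, ENNReal.toReal_ofReal hr, smul_eq_mul]
  simp only [ProbabilityMeasure.coe_mk, μ]
  rw [integral_add_measure (integrable_finsetSum_measure.2 fun i _ => hdirac _ _) (hdirac _ _),
    integral_finsetSum_measure fun i _ => hdirac _ _, hdirac_integral _ _ (sub_nonneg.2 hsum)]
  simp_rw [hdirac_integral _ _ (hc _)]

theorem exists_probabilityMeasure_integral_eq_of_tendsto {Θ X : Type*} [TopologicalSpace Θ]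
    [CompactSpace Θ] [TopologicalSpace.MetrizableSpace Θ] [MeasurableSpace Θ] [BorelSpace Θ]
    {φ : X → Θ → ℝ} (hφ : ∀ x, Continuous (φ x)) {μ : ℕ → ProbabilityMeasure Θ} {F : X → ℝ}
    {S : Set X} (h : ∀ x ∈ S, Tendsto (fun k => ∫ θ, φ x θ ∂μ k) atTop (𝓝 (F x))) :
    ∃ ν : ProbabilityMeasure Θ, ∀ x ∈ S, F x = ∫ θ, φ x θ ∂ν := by
  obtain ⟨ν, ψ, hψ, hν⟩ := CompactSpace.tendsto_subseq μ
  refine ⟨ν, fun x hx => tendsto_nhds_unique ((h x hx).comp hψ.tendsto_atTop) ?_⟩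
  exact ProbabilityMeasure.tendsto_iff_forall_integral_tendsto.1 hν
    (BoundedContinuousFunction.mkOfCompact ⟨φ x, hφ x⟩)

section Neurons

variable {ι : Type*} [Fintype ι]

def reluNeuron (z : ι → ℝ) (p : ℝ × (ι → ℝ)) : ℝ := p.1 * max (∑ i, p.2 i * z i) 0

def pathWeight (p : ℝ × (ι → ℝ)) : ℝ := |p.1| * ∑ i, |p.2 i|

variable (ι) in
def normalizedNeurons (C : ℝ) : Set (ℝ × (ι → ℝ)) := {p | |p.1| ≤ C ∧ ∑ i, |p.2 i| ≤ 1}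

-- For `w = 0` this is `(C sign a, 0)` since `0⁻¹ = 0`; that neuron only ever gets weight `0`.
noncomputable def normalizeNeuron (C : ℝ) (p : ℝ × (ι → ℝ)) : ℝ × (ι → ℝ) :=
  (C * SignType.sign p.1, (∑ i, |p.2 i|)⁻¹ • p.2)

lemma continuous_reluNeuron (z : ι → ℝ) : Continuous (reluNeuron z) := by
  unfold reluNeuron; fun_prop

lemma continuous_pathWeight : Continuous (pathWeight (ι := ι)) := by
  unfold pathWeight; fun_prop

lemma isCompact_normalizedNeurons (C : ℝ) : IsCompact (normalizedNeurons ι C) := by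
  refine Metric.isCompact_of_isClosed_isBounded ?_ ?_
  · exact (isClosed_le (f := fun p : ℝ × (ι → ℝ) => |p.1|) (by fun_prop) continuous_const).inter
      (isClosed_le (f := fun p : ℝ × (ι → ℝ) => ∑ i, |p.2 i|) (by fun_prop) continuous_const)
  · refine (Metric.isBounded_closedBall (x := (0 : ℝ × (ι → ℝ))) (r := max C 1)).subset ?_
    rintro p ⟨ha, hw⟩
    rw [mem_closedBall_zero_iff, Prod.norm_def, max_le_iff, Real.norm_eq_abs,
      pi_norm_le_iff_of_nonneg (by positivity)]
    refine ⟨ha.trans (le_max_left _ _), fun i => ?_⟩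
    have hwi : |p.2 i| ≤ ∑ j, |p.2 j| :=
      Finset.single_le_sum (f := fun j => |p.2 j|) (fun j _ => abs_nonneg _) (Finset.mem_univ i)
    exact (Real.norm_eq_abs _).trans_le ((hwi.trans hw).trans (le_max_right _ _))

lemma pathWeight_nonneg (p : ℝ × (ι → ℝ)) : 0 ≤ pathWeight p := by
  unfold pathWeight; positivity

lemma zero_mem_normalizedNeurons {C : ℝ} (hC : 0 ≤ C) :
    (0 : ℝ × (ι → ℝ)) ∈ normalizedNeurons ι C := by
  simp [normalizedNeurons, hC]

lemma reluNeuron_apply_zero (z : ι → ℝ) : reluNeuron z 0 = 0 := by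
  simp [reluNeuron]

instance (C : ℝ) : CompactSpace (normalizedNeurons ι C) :=
  isCompact_iff_compactSpace.1 (isCompact_normalizedNeurons C)

lemma pathWeight_le_of_mem_normalizedNeurons {C : ℝ} {p : ℝ × (ι → ℝ)}
    (hp : p ∈ normalizedNeurons ι C) : pathWeight p ≤ C := by
  have hC : 0 ≤ C := (abs_nonneg _).trans hp.1
  calc pathWeight p ≤ C * 1 := mul_le_mul hp.1 hp.2 (by positivity) hC
    _ = C := mul_one C

lemma normalizeNeuron_mem {C : ℝ} (hC : 0 ≤ C) (p : ℝ × (ι → ℝ)) :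
    normalizeNeuron C p ∈ normalizedNeurons ι C := by
  constructor
  · rw [normalizeNeuron, abs_mul, abs_of_nonneg hC]
    exact mul_le_of_le_one_right hC (by rcases SignType.sign p.1 with _ | _ | _ <;> simp)
  · simp only [normalizeNeuron, Pi.smul_apply, smul_eq_mul, abs_mul, abs_inv, ← Finset.mul_sum]
    rw [abs_of_nonneg (by positivity)]
    exact inv_mul_le_one

lemma reluNeuron_smul_snd {c : ℝ} (hc : 0 ≤ c) (z : ι → ℝ) (a : ℝ) (w : ι → ℝ) :
    reluNeuron z (a, c • w) = c * reluNeuron z (a, w) := by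
  simp only [reluNeuron, Pi.smul_apply, smul_eq_mul, mul_assoc, ← Finset.mul_sum]
  rw [← mul_zero c, ← mul_max_of_nonneg _ _ hc, mul_zero]
  ring

lemma pathWeight_div_mul_reluNeuron_normalizeNeuron {C : ℝ} (hC : C ≠ 0) (z : ι → ℝ)
    (p : ℝ × (ι → ℝ)) : pathWeight p / C * reluNeuron z (normalizeNeuron C p) = reluNeuron z p := by
  obtain ⟨a, w⟩ := p
  rcases (Finset.sum_nonneg fun i _ => abs_nonneg (w i)).eq_or_lt with hw | hw
  · have hw0 : w = 0 := funext fun i =>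
      abs_eq_zero.1 ((Finset.sum_eq_zero_iff_of_nonneg fun j _ => abs_nonneg (w j)).1 hw.symm i
        (Finset.mem_univ i))
    simp [hw0, reluNeuron, pathWeight]
  · rw [normalizeNeuron, reluNeuron_smul_snd (by positivity)]
    simp only [reluNeuron, pathWeight]
    have hsign := sign_mul_abs a
    field_simp
    linear_combination (max (∑ i, w i * z i) 0) * hsign

end Neurons

theorem exists_probabilityMeasure_normalizedNeurons_integral_eq {ι : Type*} [Fintype ι] {C : ℝ}
    (hC : 0 < C) {m : ℕ} (θ : Fin m → ℝ × (ι → ℝ))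
    (hpath : (1 / m : ℝ) * ∑ j, pathWeight (θ j) ≤ C) :
    ∃ μ : ProbabilityMeasure (normalizedNeurons ι C), ∀ z : ι → ℝ,
      ∫ p : normalizedNeurons ι C, reluNeuron z p ∂μ = (1 / m : ℝ) * ∑ j, reluNeuron z (θ j) := by
  set c : Fin m → ℝ := fun j => 1 / m * (pathWeight (θ j) / C)
  have hc : ∀ j, 0 ≤ c j := fun j => by have := pathWeight_nonneg (θ j); positivity
  have hsum : ∑ j, c j ≤ 1 := by
    rw [← Finset.mul_sum, ← Finset.sum_div, ← mul_div_assoc, div_le_one hC]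
    exact hpath
  obtain ⟨μ, hμ⟩ := exists_probabilityMeasure_integral_eq_sum_dirac hc hsum
    (fun j => (⟨normalizeNeuron C (θ j), normalizeNeuron_mem hC.le _⟩ : normalizedNeurons ι C))
    ⟨0, zero_mem_normalizedNeurons hC.le⟩
  refine ⟨μ, fun z => ?_⟩
  simp only [hμ, reluNeuron_apply_zero, mul_zero, add_zero, Finset.mul_sum, c, mul_assoc,
    pathWeight_div_mul_reluNeuron_normalizeNeuron hC.ne']

section Pushforward

variable {ι : Type*} [Fintype ι] {C : ℝ}

lemma measurableEmbedding_normalizedNeurons_val :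
    MeasurableEmbedding (Subtype.val : normalizedNeurons ι C → ℝ × (ι → ℝ)) :=
  .subtype_coe (isCompact_normalizedNeurons C).isClosed.measurableSet

lemma integrable_pathWeight_map_val (ν : ProbabilityMeasure (normalizedNeurons ι C)) :
    Integrable pathWeight ((ν : Measure (normalizedNeurons ι C)).map Subtype.val) :=
  measurableEmbedding_normalizedNeurons_val.integrable_map_iff.2 <|
    (BoundedContinuousFunction.mkOfCompact
      ⟨_, continuous_pathWeight.comp continuous_subtype_val⟩).integrable
        (ν : Measure (normalizedNeurons ι C))

lemma integral_pathWeight_map_val_le (ν : ProbabilityMeasure (normalizedNeurons ι C)) :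
    ∫ p, pathWeight p ∂(ν : Measure (normalizedNeurons ι C)).map Subtype.val ≤ C := by
  rw [measurableEmbedding_normalizedNeurons_val.integral_map]
  calc ∫ p, (pathWeight ∘ Subtype.val) p ∂(ν : Measure (normalizedNeurons ι C))
        ≤ ∫ _, C ∂(ν : Measure (normalizedNeurons ι C)) :=
        integral_mono (measurableEmbedding_normalizedNeurons_val.integrable_map_iff.1
          (integrable_pathWeight_map_val ν)) (integrable_const C)
          fun p => pathWeight_le_of_mem_normalizedNeurons p.2
    _ = C := by simp

end Pushforward

theorem barron_inverse_approximation_general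
    (d : ℕ) (C : ℝ) (hC : 0 < C)
    (fstar : (Fin d → ℝ) → ℝ)
    (fseq : ℕ → (Fin d → ℝ) → ℝ)
    -- each `fseq k` is a two-layer ReLU network with path norm at most `C`
    (hnet : ∀ k : ℕ, ∃ (m : ℕ) (_ : 0 < m) (a : Fin m → ℝ) (w : Fin m → (Fin (d + 1) → ℝ)),
      (∀ x : Fin d → ℝ,
        fseq k x = (1 / m : ℝ) * ∑ j, a j * max (∑ i, w j i * tilde x i) 0) ∧
      (1 / m : ℝ) * ∑ j, |a j| * ∑ i, |w j i| ≤ C)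
    (hconv : ∀ x ∈ Set.Icc (0 : Fin d → ℝ) 1,
      Filter.Tendsto (fun k => fseq k x) Filter.atTop (nhds (fstar x))) :
    ∃ ρstar : Measure (ℝ × (Fin (d + 1) → ℝ)), IsProbabilityMeasure ρstar ∧
      (∀ x ∈ Set.Icc (0 : Fin d → ℝ) 1,
        fstar x = ∫ p, p.1 * max (∑ i, p.2 i * tilde x i) 0 ∂ρstar) ∧
      Integrable (fun p : ℝ × (Fin (d + 1) → ℝ) => |p.1| * ∑ i, |p.2 i|) ρstar ∧
      (∫ p, |p.1| * ∑ i, |p.2 i| ∂ρstar) ≤ C := by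
  choose m _ a w hfseq hpath using hnet
  choose μ hμ using fun k =>
    exists_probabilityMeasure_normalizedNeurons_integral_eq hC (fun j => (a k j, w k j)) (hpath k)
  obtain ⟨ν, hν⟩ := exists_probabilityMeasure_integral_eq_of_tendsto
    (φ := fun (x : Fin d → ℝ) (p : normalizedNeurons (Fin (d + 1)) C) => reluNeuron (tilde x) p)
    (μ := μ)
    (fun x => (continuous_reluNeuron _).comp continuous_subtype_val)
    (fun x hx => (hconv x hx).congr fun k => (hfseq k x).trans (hμ k _).symm)
  refine ⟨(ν : Measure (normalizedNeurons (Fin (d + 1)) C)).map Subtype.val,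
    Measure.isProbabilityMeasure_map measurable_subtype_coe.aemeasurable,
    fun x hx => ?_, integrable_pathWeight_map_val ν, integral_pathWeight_map_val_le ν⟩
  rw [hν x hx, measurableEmbedding_normalizedNeurons_val.integral_map]
  rfl

/-- Inverse approximation theorem for Barron space: if a continuous function `f*` on
`[0,1]^d` is the pointwise limit of two-layer ReLU networks whose path norms
`(1/m) ∑_j |a_j|‖w_j‖₁` are uniformly bounded by `C`, then `f*` has a representing
probability measure `ρ*` with Barron norm `∫ |a|‖w‖₁ dρ* ≤ C`. -/
theorem barron_inverse_approximation
    (d : ℕ) (C : ℝ) (hC : 0 < C)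
    (fstar : (Fin d → ℝ) → ℝ)
    (hcont : ContinuousOn fstar (Set.Icc (0 : Fin d → ℝ) 1))
    (fseq : ℕ → (Fin d → ℝ) → ℝ)
    -- each `fseq k` is a two-layer ReLU network with path norm at most `C`
    (hnet : ∀ k : ℕ, ∃ (m : ℕ) (_ : 0 < m) (a : Fin m → ℝ) (w : Fin m → (Fin (d + 1) → ℝ)),
      (∀ x : Fin d → ℝ,
        fseq k x = (1 / m : ℝ) * ∑ j, a j * max (∑ i, w j i * tilde x i) 0) ∧
      (1 / m : ℝ) * ∑ j, |a j| * ∑ i, |w j i| ≤ C)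
    (hconv : ∀ x ∈ Set.Icc (0 : Fin d → ℝ) 1,
      Filter.Tendsto (fun k => fseq k x) Filter.atTop (nhds (fstar x))) :
    ∃ ρstar : Measure (ℝ × (Fin (d + 1) → ℝ)), IsProbabilityMeasure ρstar ∧
      (∀ x ∈ Set.Icc (0 : Fin d → ℝ) 1,
        fstar x = ∫ p, p.1 * max (∑ i, p.2 i * tilde x i) 0 ∂ρstar) ∧
      Integrable (fun p : ℝ × (Fin (d + 1) → ℝ) => |p.1| * ∑ i, |p.2 i|) ρstar ∧
      (∫ p, |p.1| * ∑ i, |p.2 i| ∂ρstar) ≤ C :=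
  barron_inverse_approximation_general d C hC fstar fseq hnet hconv
end

section
/- Let σ(z) = max(z,0) be the ReLU activation and, for x ∈ [0,1]^d, write x̃ = (xᵀ,1)ᵀ ∈ ℝ^{d+1}. For Q > 0 let 𝓕_Q be the set of all functions f : [0,1]^d → ℝ of the form f(x) = ∫ a σ(wᵀ x̃) dρ(a,w) for some probability measure ρ on ℝ × ℝ^{d+1} with ∫ |a| ‖w‖₁ dρ(a,w) ≤ Q. Then for every n and every sample S = (x₁,…,xₙ) ∈ ([0,1]^d)ⁿ, the Rademacher complexity satisfies Rad_S(𝓕_Q) = (1/n) E_ξ[ sup_{f ∈ 𝓕_Q} Σ_{i=1}^n ξᵢ f(xᵢ) ] ≤ 2 Q √( 2 log(2(d+1)) / n ), where ξ₁,…,ξₙ are i.i.d. random signs taking values ±1 with probability 1/2. -/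
open MeasureTheory

/-- The ball of radius `Q` in the Barron norm: functions represented as
`f(x) = ∫ a σ(wᵀ x̃) dρ(a,w)` on `[0,1]^d` by some probability measure `ρ` with
`∫ |a|‖w‖₁ dρ ≤ Q`. -/
def barronBall (d : ℕ) (Q : ℝ) : Set ((Fin d → ℝ) → ℝ) :=
  {f | ∃ ρ : Measure (ℝ × (Fin (d + 1) → ℝ)), IsProbabilityMeasure ρ ∧
    (∀ x ∈ Set.Icc (0 : Fin d → ℝ) 1,
      f x = ∫ p, p.1 * max (∑ i, p.2 i * tilde x i) 0 ∂ρ) ∧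
    Integrable (fun p : ℝ × (Fin (d + 1) → ℝ) => |p.1| * ∑ i, |p.2 i|) ρ ∧
    (∫ p, |p.1| * ∑ i, |p.2 i| ∂ρ) ≤ Q}

/-! For a fixed sign vector `ε`, every `f ∈ 𝓕_Q` is an average of neurons `a σ(w·x̃)`; by positive
homogeneity of `σ` each neuron contributes at most `|a| ‖w‖₁` times `T(ε)` or `T(-ε)`, where
`T(ε) = sup_{‖u‖₁ ≤ 1} ∑ εᵢ σ(u·x̃ᵢ)`. Hence `n Rad_S(𝓕_Q) ≤ 2Q 𝔼 T(ε)`. The Ledoux–Talagrand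
contraction removes the `1`-Lipschitz `σ` one coordinate at a time, through the two-point inequality
`sup (A + σ ∘ w) + sup (A - σ ∘ w) ≤ sup (A + w) + sup (A - w)`. The remaining linear supremum over
the `ℓ¹` ball is `‖∑ εᵢ x̃ᵢ‖_∞`, a maximum of `2(d+1)` sub-Gaussian sums with variance proxy `n`
(`cosh t ≤ exp (t² / 2)`), which Massart's lemma bounds by `√(2 n log (2(d+1)))`. -/

open Real Finset
open scoped BigOperators

def boolSign (b : Bool) : ℝ := if b then 1 else -1

@[simp] lemma boolSign_true : boolSign true = 1 := rfl

@[simp] lemma boolSign_false : boolSign false = -1 := rfl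

@[simp] lemma boolSign_not (b : Bool) : boolSign (!b) = -boolSign b := by cases b <;> simp

@[simp] lemma abs_boolSign (b : Bool) : |boolSign b| = 1 := by cases b <;> simp

section RademacherSum

variable {n : ℕ} {E : Type*} [AddCommGroup E] [Module ℝ E]

def rademacherSum (b : Fin n → Bool) (x : Fin n → E) : E :=
  ∑ i, boolSign (b i) • x i

lemma rademacherSum_apply {ι : Type*} (b : Fin n → Bool) (x : Fin n → ι → ℝ) (j : ι) :
    rademacherSum b x j = rademacherSum b (fun i => x i j) := by
  simp [rademacherSum, Finset.sum_apply]

lemma rademacherSum_not (b : Fin n → Bool) (x : Fin n → E) :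
    rademacherSum (fun i => !b i) x = -rademacherSum b x := by
  simp [rademacherSum, Finset.sum_neg_distrib]

lemma rademacherSum_cons (b₀ : Bool) (b : Fin n → Bool) (x : Fin (n + 1) → E) :
    rademacherSum (Fin.cons b₀ b : Fin (n + 1) → Bool) x =
      boolSign b₀ • x 0 + rademacherSum b (fun i => x i.succ) := by
  simp [rademacherSum, Fin.sum_univ_succ]

lemma mul_rademacherSum (b : Fin n → Bool) (t : ℝ) (y : Fin n → ℝ) :
    t * rademacherSum b y = rademacherSum b (fun i => t * y i) := by
  simp only [rademacherSum, smul_eq_mul, mul_sum]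
  exact sum_congr rfl fun i _ => by ring

lemma abs_rademacherSum_le (b : Fin n → Bool) (x : Fin n → ℝ) :
    |rademacherSum b x| ≤ ∑ i, |x i| :=
  (abs_sum_le_sum_abs _ _).trans_eq <| by simp [abs_mul]

lemma expect_exp_rademacherSum_eq_prod_cosh (c : Fin n → ℝ) :
    𝔼 b : Fin n → Bool, exp (rademacherSum b c) = ∏ i, cosh (c i) := by
  have hprod : ∑ b : Fin n → Bool, exp (rademacherSum b c) = ∏ i, (2 * cosh (c i)) := by
    simp only [rademacherSum, smul_eq_mul, exp_sum]
    rw [← Fintype.prod_sum (fun i (t : Bool) => exp (boolSign t * c i))]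
    simp [cosh_eq, mul_div_cancel₀]
  rw [Fintype.expect_eq_sum_div_card, hprod, prod_mul_distrib]
  simp

lemma expect_exp_rademacherSum_le (c : Fin n → ℝ) :
    𝔼 b : Fin n → Bool, exp (rademacherSum b c) ≤ exp ((∑ i, c i ^ 2) / 2) := by
  rw [expect_exp_rademacherSum_eq_prod_cosh, sum_div, exp_sum]
  exact prod_le_prod (fun i _ => (cosh_pos _).le) fun i _ => cosh_le_exp_half_sq _

end RademacherSum

lemma exp_expect_le_expect_exp {α : Type*} [Fintype α] [Nonempty α] (f : α → ℝ) :
    exp (𝔼 a, f a) ≤ 𝔼 a, exp (f a) := by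
  have hw : ∑ _a : α, (Fintype.card α : ℝ)⁻¹ = 1 := by simp
  simpa [Fintype.expect_eq_sum_div_card, div_eq_inv_mul, mul_sum] using
    convexOn_exp.map_sum_le (t := univ) (fun _ _ => by positivity) hw
      (fun a _ => Set.mem_univ (f a))

section Massart

variable {n : ℕ} {ι : Type*} [Fintype ι] [Nonempty ι]

lemma exp_mul_norm_le_sum_exp (z : ι → ℝ) (t : ℝ) :
    exp (t * ‖z‖) ≤ ∑ j, (exp (t * z j) + exp (-t * z j)) := by
  obtain ⟨j, hj⟩ := (IsGreatest.pi_norm z).1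
  rw [← hj]
  dsimp only
  rw [Real.norm_eq_abs]
  refine le_trans ?_ (single_le_sum (fun j _ => by positivity) (mem_univ j))
  rcases abs_choice (z j) with h | h <;> rw [h]
  · exact le_add_of_nonneg_right (exp_pos _).le
  · exact le_add_of_nonneg_left (exp_pos _).le |>.trans_eq' (by ring_nf)

lemma mul_expect_norm_rademacherSum_le (x : Fin n → ι → ℝ) {R : ℝ}
    (hR : ∀ j, ∑ i, x i j ^ 2 ≤ R) (t : ℝ) :
    t * 𝔼 b : Fin n → Bool, ‖rademacherSum b x‖ ≤
      log (2 * Fintype.card ι) + t ^ 2 * R / 2 := by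
  have hmgf : ∀ s, s ^ 2 = t ^ 2 → ∀ j,
      𝔼 b : Fin n → Bool, exp (s * rademacherSum b x j) ≤ exp (t ^ 2 * R / 2) := by
    intro s hs j
    simp only [rademacherSum_apply, mul_rademacherSum]
    refine (expect_exp_rademacherSum_le _).trans (exp_le_exp.2 ?_)
    simp only [mul_pow, ← mul_sum, hs]
    gcongr
    exact hR j
  have hexp : exp (t * 𝔼 b : Fin n → Bool, ‖rademacherSum b x‖) ≤
      2 * Fintype.card ι * exp (t ^ 2 * R / 2) :=
    calc exp (t * 𝔼 b : Fin n → Bool, ‖rademacherSum b x‖)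
        ≤ 𝔼 b : Fin n → Bool, exp (t * ‖rademacherSum b x‖) := by
          rw [mul_expect]; exact exp_expect_le_expect_exp _
      _ ≤ 𝔼 b : Fin n → Bool, ∑ j, (exp (t * rademacherSum b x j) +
            exp (-t * rademacherSum b x j)) := by
          gcongr with b; exact exp_mul_norm_le_sum_exp _ _
      _ = ∑ j, (𝔼 b : Fin n → Bool, exp (t * rademacherSum b x j) +
            𝔼 b : Fin n → Bool, exp (-t * rademacherSum b x j)) := by
          rw [expect_sum_comm]; simp only [expect_add_distrib]
      _ ≤ ∑ _j : ι, (exp (t ^ 2 * R / 2) + exp (t ^ 2 * R / 2)) := by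
          gcongr with j; exacts [hmgf _ rfl j, hmgf _ (neg_sq t) j]
      _ = 2 * Fintype.card ι * exp (t ^ 2 * R / 2) := by
          rw [sum_const, card_univ, nsmul_eq_mul]; ring
  rwa [← log_exp (t * _), ← log_exp (t ^ 2 * R / 2), ← log_mul (by positivity) (by positivity),
    log_le_log_iff (by positivity) (by positivity)]

theorem expect_norm_rademacherSum_le (x : Fin n → ι → ℝ) {R : ℝ} (hR₀ : 0 < R)
    (hR : ∀ j, ∑ i, x i j ^ 2 ≤ R) :
    𝔼 b : Fin n → Bool, ‖rademacherSum b x‖ ≤ √(2 * R * log (2 * Fintype.card ι)) := by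
  set L := log (2 * Fintype.card ι)
  have hL : 0 < L := log_pos <| by
    have : (1 : ℝ) ≤ Fintype.card ι := by exact_mod_cast Fintype.card_pos
    linarith
  -- `t` minimizes `L / t + t * R / 2`
  set t := √(2 * L / R)
  have ht : 0 < t := sqrt_pos.2 (by positivity)
  have ht_sq : t ^ 2 * R / 2 = L := by
    rw [sq_sqrt (by positivity)]; field_simp
  have ht_mul : t * √(2 * R * L) = 2 * L := by
    rw [← sqrt_mul (by positivity), show 2 * L / R * (2 * R * L) = (2 * L) ^ 2 by field_simp,
      sqrt_sq (by positivity)]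
  refine le_of_mul_le_mul_left ?_ ht
  linarith [mul_expect_norm_rademacherSum_le x hR t]

end Massart

lemma bddAbove_range_add_of_abs_le {T : Type*} {c g : T → ℝ} (hc : BddAbove (Set.range c))
    {K : ℝ} (hg : ∀ t, |g t| ≤ K) : BddAbove (Set.range fun t => c t + g t) := by
  obtain ⟨M, hM⟩ := hc
  exact ⟨M + K, by
    rintro _ ⟨t, rfl⟩
    exact add_le_add (hM ⟨t, rfl⟩) ((le_abs_self _).trans (hg t))⟩

section Contraction

variable {T : Type*} [Nonempty T] {φ : ℝ → ℝ}

lemma LipschitzWith.abs_le_abs_zero_add (hφ : LipschitzWith 1 φ) (x : ℝ) :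
    |φ x| ≤ |φ 0| + |x| := by
  have := hφ.dist_le_mul x 0
  simp only [NNReal.coe_one, one_mul, Real.dist_eq, sub_zero] at this
  linarith [abs_sub_abs_le_abs_sub (φ x) (φ 0)]

lemma sum_iSup_add_boolSign_mul_comp_le (hφ : LipschitzWith 1 φ) (A w : T → ℝ)
    (hbdd : ∀ s : Bool, BddAbove (Set.range fun t => A t + boolSign s * w t)) :
    ∑ s : Bool, ⨆ t, (A t + boolSign s * φ (w t)) ≤ ∑ s : Bool, ⨆ t, (A t + boolSign s * w t) := by
  have hplus := hbdd true
  have hminus := hbdd false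
  simp only [Fintype.sum_bool, boolSign_true, boolSign_false, one_mul, neg_one_mul]
    at hplus hminus ⊢
  refine ciSup_add_ciSup_le fun s t => ?_
  have hlip : φ (w s) - φ (w t) ≤ |w s - w t| := by
    have := hφ.dist_le_mul (w s) (w t)
    simp only [NNReal.coe_one, one_mul, Real.dist_eq] at this
    exact (le_abs_self _).trans this
  -- pair `s` with `t` or `t` with `s`, whichever puts the larger value of `w` first
  rcases le_total (w t) (w s) with h | h
  · have := add_le_add (le_ciSup hplus s) (le_ciSup hminus t)
    rw [abs_of_nonneg (sub_nonneg.2 h)] at hlip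
    linarith
  · have := add_le_add (le_ciSup hplus t) (le_ciSup hminus s)
    rw [abs_of_nonpos (sub_nonpos.2 h)] at hlip
    linarith

lemma sum_fun_fin_succ {α M : Type*} [Fintype α] [AddCommMonoid M] {n : ℕ}
    (F : (Fin (n + 1) → α) → M) :
    ∑ b, F b = ∑ b₀, ∑ b : Fin n → α, F (Fin.cons b₀ b) := by
  rw [← (Fin.consEquiv fun _ => α).sum_comp, Fintype.sum_prod_type]
  rfl

theorem sum_iSup_add_rademacherSum_comp_le (hφ : LipschitzWith 1 φ) {n : ℕ} (c : T → ℝ)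
    (v : T → Fin n → ℝ) (hc : BddAbove (Set.range c)) {C : Fin n → ℝ} (hv : ∀ t i, |v t i| ≤ C i) :
    ∑ b : Fin n → Bool, ⨆ t, (c t + rademacherSum b (fun i => φ (v t i))) ≤
      ∑ b : Fin n → Bool, ⨆ t, (c t + rademacherSum b (v t)) := by
  induction n generalizing c with
  | zero => simp [rademacherSum]
  | succ n ih =>
    simp only [sum_fun_fin_succ, rademacherSum_cons, smul_eq_mul]
    calc ∑ b₀, ∑ b : Fin n → Bool,
          ⨆ t, (c t + (boolSign b₀ * φ (v t 0) + rademacherSum b (fun i => φ (v t i.succ))))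
        = ∑ b : Fin n → Bool, ∑ b₀,
          ⨆ t, (c t + rademacherSum b (fun i => φ (v t i.succ)) + boolSign b₀ * φ (v t 0)) := by
          rw [sum_comm]
          exact sum_congr rfl fun _ _ => sum_congr rfl fun _ _ => iSup_congr fun _ => by ring
      _ ≤ ∑ b : Fin n → Bool, ∑ b₀,
          ⨆ t, (c t + rademacherSum b (fun i => φ (v t i.succ)) + boolSign b₀ * v t 0) := by
          refine sum_le_sum fun b _ => sum_iSup_add_boolSign_mul_comp_le hφ _ _ fun s => ?_
          simp only [add_assoc]
          refine bddAbove_range_add_of_abs_le hc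
            (K := ∑ i : Fin n, (|φ 0| + C i.succ) + C 0) fun t => ?_
          refine (abs_add_le _ _).trans (add_le_add ?_ (by simpa using hv t 0))
          refine (abs_rademacherSum_le _ _).trans (sum_le_sum fun i _ => ?_)
          linarith [hφ.abs_le_abs_zero_add (v t i.succ), hv t i.succ]
      _ = ∑ b₀, ∑ b : Fin n → Bool,
          ⨆ t, (c t + boolSign b₀ * v t 0 + rademacherSum b (fun i => φ (v t i.succ))) := by
          rw [sum_comm]
          exact sum_congr rfl fun _ _ => sum_congr rfl fun _ _ => iSup_congr fun _ => by ring
      _ ≤ ∑ b₀, ∑ b : Fin n → Bool,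
          ⨆ t, (c t + boolSign b₀ * v t 0 + rademacherSum b (fun i => v t i.succ)) := by
          refine sum_le_sum fun b₀ _ => ?_
          refine ih _ (fun t i => v t i.succ) ?_ (C := fun i => C i.succ) fun t i => hv t i.succ
          exact bddAbove_range_add_of_abs_le hc fun t => by simpa using hv t 0
      _ = _ := sum_congr rfl fun _ _ => sum_congr rfl fun _ _ => iSup_congr fun _ => by ring

end Contraction

section ReLU

variable {ι : Type*} [Fintype ι] {n : ℕ}

lemma abs_sum_mul_le_sum_abs_mul_norm (w y : ι → ℝ) : |∑ j, w j * y j| ≤ (∑ j, |w j|) * ‖y‖ := by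
  rw [sum_mul]
  refine (abs_sum_le_sum_abs _ _).trans (sum_le_sum fun j _ => ?_)
  rw [abs_mul]
  gcongr
  exact norm_le_pi_norm y j

lemma abs_max_zero_le (y : ℝ) : |max y 0| ≤ |y| :=
  abs_le.2 ⟨by linarith [abs_nonneg y, le_max_right y 0], max_le (le_abs_self y) (abs_nonneg y)⟩

def l1UnitBall (ι : Type*) [Fintype ι] : Set (ι → ℝ) := {u | ∑ j, |u j| ≤ 1}

instance : Nonempty (l1UnitBall ι) := ⟨⟨0, by simp [l1UnitBall]⟩⟩

lemma abs_sum_mul_le_of_mem_l1UnitBall {u : ι → ℝ} (hu : u ∈ l1UnitBall ι) (y : ι → ℝ) :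
    |∑ j, u j * y j| ≤ ‖y‖ :=
  (abs_sum_mul_le_sum_abs_mul_norm u y).trans (mul_le_of_le_one_left (norm_nonneg y) hu)

noncomputable def reluSup (x : Fin n → ι → ℝ) (b : Fin n → Bool) : ℝ :=
  ⨆ u : l1UnitBall ι, rademacherSum b (fun i => max (∑ j, u.1 j * x i j) 0)

lemma bddAbove_range_rademacherSum_relu (x : Fin n → ι → ℝ) (b : Fin n → Bool) :
    BddAbove (Set.range fun u : l1UnitBall ι =>
      rademacherSum b (fun i => max (∑ j, u.1 j * x i j) 0)) := by
  refine ⟨∑ i, ‖x i‖, ?_⟩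
  rintro _ ⟨u, rfl⟩
  refine (le_abs_self _).trans <| (abs_rademacherSum_le _ _).trans <| sum_le_sum fun i _ => ?_
  exact (abs_max_zero_le _).trans (abs_sum_mul_le_of_mem_l1UnitBall u.2 _)

lemma reluSup_nonneg (x : Fin n → ι → ℝ) (b : Fin n → Bool) : 0 ≤ reluSup x b :=
  le_ciSup_of_le (bddAbove_range_rademacherSum_relu x b) ⟨0, by simp [l1UnitBall]⟩
    (by simp [rademacherSum])

lemma rademacherSum_relu_le (x : Fin n → ι → ℝ) (b : Fin n → Bool) (w : ι → ℝ) :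
    rademacherSum b (fun i => max (∑ j, w j * x i j) 0) ≤ (∑ j, |w j|) * reluSup x b := by
  set c := ∑ j, |w j|
  rcases (sum_nonneg fun j _ => abs_nonneg (w j) : 0 ≤ c).eq_or_lt with hc | hc
  · have hw : w = 0 := funext fun j => abs_eq_zero.1 <|
      (sum_eq_zero_iff_of_nonneg fun j _ => abs_nonneg (w j)).1 hc.symm j (mem_univ j)
    simp [hw, rademacherSum, c]
  have hu : c⁻¹ • w ∈ l1UnitBall ι := by
    simp [l1UnitBall, abs_mul, ← mul_sum, abs_of_pos hc, inv_mul_cancel₀ hc.ne', c]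
  calc rademacherSum b (fun i => max (∑ j, w j * x i j) 0)
      = c * rademacherSum b (fun i => max (∑ j, (c⁻¹ • w) j * x i j) 0) := by
        rw [mul_rademacherSum]
        congr 1
        funext i
        rw [mul_max_of_nonneg _ _ hc.le, mul_zero, mul_sum]
        simp only [Pi.smul_apply, smul_eq_mul, ← mul_assoc, mul_inv_cancel₀ hc.ne', one_mul, c]
    _ ≤ c * reluSup x b := by
        gcongr
        exact le_ciSup (bddAbove_range_rademacherSum_relu x b) ⟨_, hu⟩

lemma mul_rademacherSum_relu_le (x : Fin n → ι → ℝ) (b : Fin n → Bool) (a : ℝ) (w : ι → ℝ) :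
    a * rademacherSum b (fun i => max (∑ j, w j * x i j) 0) ≤
      |a| * (∑ j, |w j|) * (reluSup x b + reluSup x (fun i => !b i)) := by
  have hw : 0 ≤ ∑ j, |w j| := sum_nonneg fun j _ => abs_nonneg (w j)
  have h := reluSup_nonneg x b
  have h' := reluSup_nonneg x (fun i => !b i)
  rw [mul_assoc]
  rcases le_or_gt 0 a with ha | ha
  · rw [abs_of_nonneg ha]
    gcongr
    exact (rademacherSum_relu_le x b w).trans
      (mul_le_mul_of_nonneg_left (le_add_of_nonneg_right h') hw)
  · rw [abs_of_neg ha, show a * rademacherSum b _ = -a * -rademacherSum b _ by ring,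
      ← rademacherSum_not]
    gcongr
    · linarith
    · exact (rademacherSum_relu_le x _ w).trans
        (mul_le_mul_of_nonneg_left (le_add_of_nonneg_left h) hw)

variable {ρ : Measure (ℝ × (ι → ℝ))}

lemma integrable_mul_relu (hρ : Integrable (fun p : ℝ × (ι → ℝ) => |p.1| * ∑ j, |p.2 j|) ρ)
    (y : ι → ℝ) : Integrable (fun p : ℝ × (ι → ℝ) => p.1 * max (∑ j, p.2 j * y j) 0) ρ := by
  refine (hρ.mul_const ‖y‖).mono' ?_ (ae_of_all _ fun p => ?_)
  · exact (continuous_fst.mul ((continuous_finsetSum _ fun j _ =>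
      ((continuous_apply j).comp continuous_snd).mul continuous_const).max
        continuous_const)).aestronglyMeasurable
  · rw [Real.norm_eq_abs, abs_mul, mul_assoc]
    gcongr
    exact (abs_max_zero_le _).trans (abs_sum_mul_le_sum_abs_mul_norm _ _)

lemma rademacherSum_integral_relu_le
    (hρ : Integrable (fun p : ℝ × (ι → ℝ) => |p.1| * ∑ j, |p.2 j|) ρ)
    (x : Fin n → ι → ℝ) (b : Fin n → Bool) :
    rademacherSum b (fun i => ∫ p, p.1 * max (∑ j, p.2 j * x i j) 0 ∂ρ) ≤
      (∫ p, |p.1| * ∑ j, |p.2 j| ∂ρ) * (reluSup x b + reluSup x (fun i => !b i)) := by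
  have hint := fun i => integrable_mul_relu hρ (x i)
  calc rademacherSum b (fun i => ∫ p, p.1 * max (∑ j, p.2 j * x i j) 0 ∂ρ)
      = ∫ p, p.1 * rademacherSum b (fun i => max (∑ j, p.2 j * x i j) 0) ∂ρ := by
        simp only [mul_rademacherSum]
        simp only [rademacherSum, smul_eq_mul]
        rw [integral_finsetSum _ fun i _ => (hint i).const_mul _]
        simp only [integral_const_mul]
    _ ≤ ∫ p, |p.1| * (∑ j, |p.2 j|) * (reluSup x b + reluSup x (fun i => !b i)) ∂ρ := by
        refine integral_mono ?_ (hρ.mul_const _) fun p => mul_rademacherSum_relu_le x b _ _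
        simp only [mul_rademacherSum]
        simp only [rademacherSum, smul_eq_mul]
        exact integrable_finsetSum _ fun i _ => (hint i).const_mul _
    _ = _ := integral_mul_const _ _

theorem expect_reluSup_le (x : Fin n → ι → ℝ) :
    𝔼 b : Fin n → Bool, reluSup x b ≤ 𝔼 b : Fin n → Bool, ‖rademacherSum b x‖ := by
  simp only [Fintype.expect_eq_sum_div_card]
  refine div_le_div_of_nonneg_right ?_ (Nat.cast_nonneg _)
  have hlin : ∀ b : Fin n → Bool, ⨆ u : l1UnitBall ι,
      (0 + rademacherSum b (fun i => ∑ j, u.1 j * x i j)) ≤ ‖rademacherSum b x‖ := by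
    refine fun b => ciSup_le fun u => ?_
    have : rademacherSum b (fun i => ∑ j, u.1 j * x i j) = ∑ j, u.1 j * rademacherSum b x j := by
      simp only [rademacherSum_apply]
      simp only [rademacherSum, smul_eq_mul, mul_sum]
      rw [sum_comm]
      exact sum_congr rfl fun _ _ => sum_congr rfl fun _ _ => by ring
    rw [zero_add, this]
    exact (le_abs_self _).trans (abs_sum_mul_le_of_mem_l1UnitBall u.2 _)
  calc ∑ b : Fin n → Bool, reluSup x b
      = ∑ b : Fin n → Bool, ⨆ u : l1UnitBall ι,
          (0 + rademacherSum b (fun i => max (∑ j, u.1 j * x i j) 0)) := by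
        simp only [reluSup, zero_add]
    _ ≤ ∑ b : Fin n → Bool, ⨆ u : l1UnitBall ι,
          (0 + rademacherSum b (fun i => ∑ j, u.1 j * x i j)) :=
        sum_iSup_add_rademacherSum_comp_le (T := l1UnitBall ι) (φ := fun y => max y 0)
          (LipschitzWith.id.max_const 0) (fun _ => 0) (fun u i => ∑ j, u.1 j * x i j)
          ⟨0, Set.forall_mem_range.2 fun _ => le_rfl⟩
          fun u i => abs_sum_mul_le_of_mem_l1UnitBall u.2 (x i)
    _ ≤ ∑ b : Fin n → Bool, ‖rademacherSum b x‖ := sum_le_sum fun b _ => hlin b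

end ReLU

lemma PMF.integral_uniformOfFintype_eq_expect {α : Type*} [Fintype α] [Nonempty α]
    [MeasurableSpace α] [MeasurableSingletonClass α] (f : α → ℝ) :
    ∫ a, f a ∂(PMF.uniformOfFintype α).toMeasure = 𝔼 a, f a := by
  rw [PMF.integral_eq_sum, Fintype.expect_eq_sum_div_card, sum_div]
  simp [div_eq_inv_mul]

lemma abs_tilde_le_one {d : ℕ} {x : Fin d → ℝ} (hx : x ∈ Set.Icc 0 1) (j : Fin (d + 1)) :
    |tilde x j| ≤ 1 := by
  refine Fin.lastCases ?_ (fun j => ?_) j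
  · simp [tilde]
  · rw [tilde, Fin.snoc_castSucc, abs_of_nonneg (hx.1 j)]
    exact hx.2 j

theorem iSup_barronBall_le {d n : ℕ} {Q : ℝ} (hQ : 0 ≤ Q) {S : Fin n → Fin d → ℝ}
    (hS : ∀ i, S i ∈ Set.Icc 0 1) (b : Fin n → Bool) :
    ⨆ f ∈ barronBall d Q, rademacherSum b (fun i => f (S i)) ≤
      Q * (reluSup (fun i => tilde (S i)) b + reluSup (fun i => tilde (S i)) (fun i => !b i)) := by
  have hT := add_nonneg (reluSup_nonneg (fun i => tilde (S i)) b)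
    (reluSup_nonneg (fun i => tilde (S i)) fun i => !b i)
  refine Real.iSup_le (fun f => Real.iSup_le (fun hf => ?_) (by positivity)) (by positivity)
  obtain ⟨ρ, -, hfρ, hρ, hρQ⟩ := hf
  calc rademacherSum b (fun i => f (S i))
      = rademacherSum b (fun i => ∫ p, p.1 * max (∑ j, p.2 j * tilde (S i) j) 0 ∂ρ) := by
        simp only [hfρ _ (hS _)]
    _ ≤ _ := rademacherSum_integral_relu_le hρ _ b
    _ ≤ _ := by gcongr

theorem barron_ball_rademacher_general
    (d : ℕ) (Q : ℝ) (hQ : 0 < Q) (n : ℕ)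
    (S : Fin n → (Fin d → ℝ)) (hS : ∀ i, S i ∈ Set.Icc (0 : Fin d → ℝ) 1) :
    (1 / n : ℝ) * ∫ b : Fin n → Bool,
        (⨆ f ∈ barronBall d Q, ∑ i, (if b i then (1 : ℝ) else -1) * f (S i))
      ∂((PMF.uniformOfFintype (Fin n → Bool)).toMeasure)
      ≤ 2 * Q * Real.sqrt (2 * Real.log (2 * (d + 1)) / n) := by
  rcases n.eq_zero_or_pos with rfl | hn
  · simp -- both sides vanish, by `x / 0 = 0`
  set x : Fin n → Fin (d + 1) → ℝ := fun i => tilde (S i)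
  have hx : ∀ j, ∑ i, x i j ^ 2 ≤ n := fun j =>
    (sum_le_sum fun i _ => (sq_le_one_iff_abs_le_one _).2 (abs_tilde_le_one (hS i) j)).trans_eq
      (by simp)
  have hflip : 𝔼 b : Fin n → Bool, reluSup x (fun i => !b i) = 𝔼 b, reluSup x b :=
    Fintype.expect_bijective _ (Function.Involutive.bijective fun b => by simp) _ _ fun _ => rfl
  calc (1 / n : ℝ) * ∫ b : Fin n → Bool,
        (⨆ f ∈ barronBall d Q, ∑ i, (if b i then (1 : ℝ) else -1) * f (S i))
      ∂((PMF.uniformOfFintype (Fin n → Bool)).toMeasure)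
      = 1 / n * 𝔼 b, ⨆ f ∈ barronBall d Q, rademacherSum b (fun i => f (S i)) := by
        rw [PMF.integral_uniformOfFintype_eq_expect]; rfl
    _ ≤ 1 / n * 𝔼 b, Q * (reluSup x b + reluSup x (fun i => !b i)) := by
        gcongr with b; exact iSup_barronBall_le hQ.le hS b
    _ = 1 / n * (2 * Q * 𝔼 b, reluSup x b) := by
        rw [← mul_expect, expect_add_distrib, hflip]; ring
    _ ≤ 1 / n * (2 * Q * √(2 * n * log (2 * (d + 1)))) := by
        gcongr
        refine (expect_reluSup_le x).trans ?_
        simpa using expect_norm_rademacherSum_le x (by positivity) hx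
    _ = 2 * Q * √(2 * log (2 * (d + 1)) / n) := by
        rw [show 2 * log (2 * (d + 1)) / n = 2 * n * log (2 * (d + 1)) / n ^ 2 by field_simp,
          sqrt_div' _ (by positivity), sqrt_sq (by positivity)]
        ring

/-- Rademacher complexity bound for the Barron ball:
`Rad_S(𝓕_Q) ≤ 2Q√(2 log(2(d+1))/n)` for any sample `S ⊆ [0,1]^d`. The random signs are
modeled by uniform random booleans. -/
theorem barron_ball_rademacher
    (d : ℕ) (Q : ℝ) (hQ : 0 < Q) (n : ℕ) (hn : 0 < n)
    (S : Fin n → (Fin d → ℝ)) (hS : ∀ i, S i ∈ Set.Icc (0 : Fin d → ℝ) 1) :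
    (1 / n : ℝ) * ∫ b : Fin n → Bool,
        (⨆ f ∈ barronBall d Q, ∑ i, (if b i then (1 : ℝ) else -1) * f (S i))
      ∂((PMF.uniformOfFintype (Fin n → Bool)).toMeasure)
      ≤ 2 * Q * Real.sqrt (2 * Real.log (2 * (d + 1)) / n) :=
  barron_ball_rademacher_general d Q hQ n S hS
end

section
/- Let (Ω₂, π²), (Ω₁, π¹), (Ω₀, π⁰) be probability spaces and let a² ∈ L²(π²), a¹ ∈ L²(π² ⊗ π¹), a⁰ ∈ L²(π¹ ⊗ π⁰) be measurable functions (a² : Ω₂ → ℝ, a¹ : Ω₂ × Ω₁ → ℝ, a⁰ : Ω₁ × Ω₀ → ℝ). Then ∫_{Ω₂×Ω₁×Ω₀} | a²(θ₂) a¹(θ₂,θ₁) a⁰(θ₁,θ₀) | d(π²⊗π¹⊗π⁰)(θ₂,θ₁,θ₀) ≤ ‖a²‖_{L²(π²)} ‖a¹‖_{L²(π²⊗π¹)} ‖a⁰‖_{L²(π¹⊗π⁰)}. -/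
/-!
Split the integrand as `(a²(θ₂) a⁰(θ₁,θ₀)) · a¹(θ₂,θ₁)` and apply Cauchy–Schwarz on
`π₂ ⊗ π₁ ⊗ π₀`. Since `a²` and `a⁰` share no variable, the square of the first factor is a
tensor product and integrates to `‖a²‖² ‖a⁰‖²`; the second factor does not depend on `θ₀`, and
`π₀` is a probability measure, so its square integrates to `‖a¹‖²`.
-/

namespace MeasureTheory

variable {α β : Type*} [MeasurableSpace α] [MeasurableSpace β] {μ : Measure α} {ν : Measure β}

theorem integral_abs_mul_le_sqrt_integral_sq_mul_sqrt_integral_sq {f g : α → ℝ}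
    (hf : MemLp f 2 μ) (hg : MemLp g 2 μ) :
    ∫ x, |f x * g x| ∂μ ≤ √(∫ x, f x ^ 2 ∂μ) * √(∫ x, g x ^ 2 ∂μ) := by
  have hholder := integral_mul_norm_le_Lp_mul_Lq (p := 2) (q := 2) Real.HolderConjugate.two_two
    (by simpa using hf) (by simpa using hg)
  simpa only [Real.norm_eq_abs, ← abs_mul, Real.rpow_two, sq_abs, ← Real.sqrt_eq_rpow]
    using hholder

theorem MemLp.mul_prod_of_two [SFinite ν] {f : α → ℝ} {g : β → ℝ}
    (hf : MemLp f 2 μ) (hg : MemLp g 2 ν) :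
    MemLp (fun z : α × β => f z.1 * g z.2) 2 (μ.prod ν) := by
  refine (memLp_two_iff_integrable_sq (hf.1.comp_fst.mul hg.1.comp_snd)).mpr ?_
  simpa only [Pi.mul_apply, mul_pow] using hf.integrable_sq.mul_prod hg.integrable_sq

theorem MeasurePreserving.integral_comp_of_aestronglyMeasurable {E : Type*}
    [NormedAddCommGroup E] [NormedSpace ℝ E] {φ : α → β} (hφ : MeasurePreserving φ μ ν)
    {g : β → E} (hg : AEStronglyMeasurable g ν) :
    ∫ x, g (φ x) ∂μ = ∫ y, g y ∂ν := by
  rw [← hφ.map_eq] at hg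
  rw [← integral_map hφ.aemeasurable hg, hφ.map_eq]

end MeasureTheory

open MeasureTheory

theorem path_norm_le_prod_L2_norms_general
    {Ω₂ Ω₁ Ω₀ : Type*} [MeasurableSpace Ω₂] [MeasurableSpace Ω₁] [MeasurableSpace Ω₀]
    (π₂ : Measure Ω₂) (π₁ : Measure Ω₁) (π₀ : Measure Ω₀)
    [IsProbabilityMeasure π₂] [IsProbabilityMeasure π₁] [IsProbabilityMeasure π₀]
    (a2 : Ω₂ → ℝ) (a1 : Ω₂ × Ω₁ → ℝ) (a0 : Ω₁ × Ω₀ → ℝ)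
    (ha2 : MemLp a2 2 π₂) (ha1 : MemLp a1 2 (π₂.prod π₁)) (ha0 : MemLp a0 2 (π₁.prod π₀)) :
    (∫ θ : Ω₂ × Ω₁ × Ω₀, |a2 θ.1 * a1 (θ.1, θ.2.1) * a0 (θ.2.1, θ.2.2)|
        ∂(π₂.prod (π₁.prod π₀)))
      ≤ Real.sqrt (∫ θ₂, (a2 θ₂) ^ 2 ∂π₂)
        * Real.sqrt (∫ θ, (a1 θ) ^ 2 ∂(π₂.prod π₁))
        * Real.sqrt (∫ θ, (a0 θ) ^ 2 ∂(π₁.prod π₀)) := by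
  have hproj : MeasurePreserving (fun θ : Ω₂ × Ω₁ × Ω₀ => (θ.1, θ.2.1))
      (π₂.prod (π₁.prod π₀)) (π₂.prod π₁) :=
    (MeasurePreserving.id π₂).prod measurePreserving_fst
  have ha20 := ha2.mul_prod_of_two ha0
  have ha1proj := ha1.comp_measurePreserving hproj
  calc (∫ θ : Ω₂ × Ω₁ × Ω₀, |a2 θ.1 * a1 (θ.1, θ.2.1) * a0 (θ.2.1, θ.2.2)|
          ∂(π₂.prod (π₁.prod π₀)))
      = ∫ θ : Ω₂ × Ω₁ × Ω₀, |a2 θ.1 * a0 θ.2 * a1 (θ.1, θ.2.1)| ∂(π₂.prod (π₁.prod π₀)) := by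
        congr 1 with θ
        rw [mul_right_comm]
    _ ≤ √(∫ θ : Ω₂ × Ω₁ × Ω₀, (a2 θ.1 * a0 θ.2) ^ 2 ∂(π₂.prod (π₁.prod π₀)))
          * √(∫ θ : Ω₂ × Ω₁ × Ω₀, a1 (θ.1, θ.2.1) ^ 2 ∂(π₂.prod (π₁.prod π₀))) :=
        integral_abs_mul_le_sqrt_integral_sq_mul_sqrt_integral_sq ha20 ha1proj
    _ = √((∫ θ₂, a2 θ₂ ^ 2 ∂π₂) * ∫ θ, a0 θ ^ 2 ∂(π₁.prod π₀))
          * √(∫ θ, a1 θ ^ 2 ∂(π₂.prod π₁)) := by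
        simp only [mul_pow]
        rw [integral_prod_mul (fun θ₂ => a2 θ₂ ^ 2) (fun θ => a0 θ ^ 2),
          hproj.integral_comp_of_aestronglyMeasurable (g := fun θ => a1 θ ^ 2)
            ha1.integrable_sq.1]
    _ = _ := by
        rw [Real.sqrt_mul (integral_nonneg fun _ => sq_nonneg _)]
        ring

/-- The path-norm proxy of a network with two hidden layers is controlled by the product of
the `L²`-norms of the weight functions across layers:
`∫ |a²(θ₂) a¹(θ₂,θ₁) a⁰(θ₁,θ₀)| ≤ ‖a²‖_{L²(π₂)} ‖a¹‖_{L²(π₂⊗π₁)} ‖a⁰‖_{L²(π₁⊗π₀)}`. -/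
theorem path_norm_le_prod_L2_norms
    {Ω₂ Ω₁ Ω₀ : Type*} [MeasurableSpace Ω₂] [MeasurableSpace Ω₁] [MeasurableSpace Ω₀]
    (π₂ : Measure Ω₂) (π₁ : Measure Ω₁) (π₀ : Measure Ω₀)
    [IsProbabilityMeasure π₂] [IsProbabilityMeasure π₁] [IsProbabilityMeasure π₀]
    (a2 : Ω₂ → ℝ) (a1 : Ω₂ × Ω₁ → ℝ) (a0 : Ω₁ × Ω₀ → ℝ)
    (ha2m : Measurable a2) (ha1m : Measurable a1) (ha0m : Measurable a0)
    (ha2 : MemLp a2 2 π₂) (ha1 : MemLp a1 2 (π₂.prod π₁)) (ha0 : MemLp a0 2 (π₁.prod π₀)) :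
    (∫ θ : Ω₂ × Ω₁ × Ω₀, |a2 θ.1 * a1 (θ.1, θ.2.1) * a0 (θ.2.1, θ.2.2)|
        ∂(π₂.prod (π₁.prod π₀)))
      ≤ Real.sqrt (∫ θ₂, (a2 θ₂) ^ 2 ∂π₂)
        * Real.sqrt (∫ θ, (a1 θ) ^ 2 ∂(π₂.prod π₁))
        * Real.sqrt (∫ θ, (a0 θ) ^ 2 ∂(π₁.prod π₀)) :=
  path_norm_le_prod_L2_norms_general π₂ π₁ π₀ a2 a1 a0 ha2 ha1 ha0
end

section
/- Let a₁, …, aₙ ≥ 0, let a = (1/n) Σ_{i=1}^n a_i and s² = (1/n) Σ_{i=1}^n a_i² − a². Fix a learning rate η > 0 and x₀ ∈ ℝ, and define the stochastic gradient descent iteration x_{t+1} = (1 − η a_{ξ_t}) x_t for t ≥ 0, where ξ₀, ξ₁, ξ₂, … are i.i.d. random indices uniform on {1,…,n}, independent of everything else. Then for every t ≥ 0, E[x_t] = (1 − η a)^t x₀ and E[x_t²] = ( (1 − η a)² + η² s² )^t x₀². -/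
open MeasureTheory ProbabilityTheory

/-! Unrolling `x (t + 1) = (1 - η a (ξ t)) x t` gives `x t = x₀ ∏_{k < t} (1 - η a (ξ k))`, and
`x t ^ 2` is a product of the same shape with squared factors. By independence the expectation of
such a product is the product of the expectations, and each factor has the uniform average as its
expectation; for the squared factors that average is `(1 - η a)² + η² s²` (mean of a square equals
square of the mean plus variance). -/

lemma eq_prod_mul_of_succ_eq_mul {Ω ι : Type*} {ξ : ℕ → Ω → ι} {g : ι → ℝ} {y : ℕ → Ω → ℝ}
    {y₀ : ℝ} (hy0 : ∀ ω, y 0 ω = y₀) (hyrec : ∀ t ω, y (t + 1) ω = g (ξ t ω) * y t ω)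
    (t : ℕ) (ω : Ω) :
    y t ω = (∏ k : Fin t, g (ξ k ω)) * y₀ := by
  induction t with
  | zero => simp [hy0]
  | succ t ih =>
    rw [hyrec, ih, Fin.prod_univ_castSucc]
    simp only [Fin.val_castSucc, Fin.val_last]
    ring

theorem integral_eq_pow_of_succ_eq_mul {Ω ι : Type*} [MeasurableSpace Ω] [MeasurableSpace ι]
    {Q : Measure Ω} {μ : Measure ι} {ξ : ℕ → Ω → ι}
    (hξ : ∀ t, Measurable (ξ t)) (hindep : iIndepFun ξ Q) (hlaw : ∀ t, Q.map (ξ t) = μ)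
    {g : ι → ℝ} (hg : Measurable g) {y : ℕ → Ω → ℝ} {y₀ : ℝ}
    (hy0 : ∀ ω, y 0 ω = y₀) (hyrec : ∀ t ω, y (t + 1) ω = g (ξ t ω) * y t ω) (t : ℕ) :
    ∫ ω, y t ω ∂Q = (∫ i, g i ∂μ) ^ t * y₀ := by
  have hindep_t : iIndepFun (fun k : Fin t ↦ ξ k) Q := hindep.precomp Fin.val_injective
  have hfactor : ∫ ω, ∏ k : Fin t, g (ξ k ω) ∂Q = ∏ k : Fin t, ∫ ω, g (ξ k ω) ∂Q :=
    hindep_t.integral_fun_prod_comp (fun k ↦ (hξ k).aemeasurable)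
      (fun _ ↦ hg.aestronglyMeasurable)
  have hmean (k : ℕ) : ∫ ω, g (ξ k ω) ∂Q = ∫ i, g i ∂μ := by
    rw [← hlaw k, integral_map (hξ k).aemeasurable hg.aestronglyMeasurable]
  simp_rw [eq_prod_mul_of_succ_eq_mul hy0 hyrec t, integral_mul_const, hfactor, hmean,
    Finset.prod_const, Finset.card_univ, Fintype.card_fin]

lemma PMF.integral_uniformOfFintype {ι : Type*} [Fintype ι] [Nonempty ι] [MeasurableSpace ι]
    [MeasurableSingletonClass ι] (g : ι → ℝ) :
    ∫ i, g i ∂(PMF.uniformOfFintype ι).toMeasure = (Fintype.card ι : ℝ)⁻¹ * ∑ i, g i := by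
  rw [PMF.integral_eq_sum]
  simp [Finset.mul_sum]

lemma average_sq_one_sub_mul {ι : Type*} (s : Finset ι) (hs : s.Nonempty) (a : ι → ℝ) (η : ℝ) :
    (s.card : ℝ)⁻¹ * ∑ i ∈ s, (1 - η * a i) ^ 2
      = (1 - η * ((s.card : ℝ)⁻¹ * ∑ i ∈ s, a i)) ^ 2
        + η ^ 2 * ((s.card : ℝ)⁻¹ * ∑ i ∈ s, a i ^ 2 - ((s.card : ℝ)⁻¹ * ∑ i ∈ s, a i) ^ 2) := by
  have hcard : (s.card : ℝ) ≠ 0 := by exact_mod_cast hs.card_pos.ne'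
  simp only [sub_sq, mul_pow, one_pow, mul_one, Finset.sum_add_distrib, Finset.sum_sub_distrib,
    ← Finset.mul_sum, Finset.sum_const, nsmul_eq_mul]
  field_simp
  ring

theorem sgd_sharpness_nonuniformity_moments_general
    (n : ℕ) (hn : 0 < n) (a : Fin n → ℝ)
    (η : ℝ) (x₀ : ℝ)
    {Ω : Type*} [MeasurableSpace Ω] (Q : Measure Ω)
    (ξ : ℕ → Ω → Fin n) (hξmeas : ∀ t, Measurable (ξ t))
    (hindep : iIndepFun ξ Q)
    (hunif : ∀ t, Measure.map (ξ t) Q =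
      (@PMF.uniformOfFintype (Fin n) _ ⟨⟨0, hn⟩⟩).toMeasure)
    (x : ℕ → Ω → ℝ)
    (hx0 : ∀ ω, x 0 ω = x₀)
    (hxrec : ∀ t ω, x (t + 1) ω = (1 - η * a (ξ t ω)) * x t ω) :
    ∀ t : ℕ,
      (∫ ω, x t ω ∂Q) = (1 - η * ((1 / n : ℝ) * ∑ i, a i)) ^ t * x₀ ∧
      (∫ ω, (x t ω) ^ 2 ∂Q)
        = ((1 - η * ((1 / n : ℝ) * ∑ i, a i)) ^ 2
            + η ^ 2 * ((1 / n : ℝ) * ∑ i, (a i) ^ 2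
                - ((1 / n : ℝ) * ∑ i, a i) ^ 2)) ^ t * x₀ ^ 2 := by
  have : Nonempty (Fin n) := ⟨⟨0, hn⟩⟩
  intro t
  simp only [one_div]
  constructor
  · rw [integral_eq_pow_of_succ_eq_mul hξmeas hindep hunif (g := fun i ↦ 1 - η * a i)
      (measurable_of_finite _) hx0 hxrec, PMF.integral_uniformOfFintype]
    simp only [Fintype.card_fin, Finset.sum_sub_distrib, ← Finset.mul_sum, Finset.sum_const,
      Finset.card_univ, nsmul_eq_mul, mul_one]
    field_simp
  · rw [integral_eq_pow_of_succ_eq_mul hξmeas hindep hunif (g := fun i ↦ (1 - η * a i) ^ 2)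
      (measurable_of_finite _) (y := fun t ω ↦ x t ω ^ 2) (y₀ := x₀ ^ 2) (by simp [hx0])
      (by simp [hxrec, mul_pow]), PMF.integral_uniformOfFintype,
      ← Finset.card_univ, average_sq_one_sub_mul _ Finset.univ_nonempty, Finset.card_univ,
      Fintype.card_fin]

/-- First and second moments of SGD on the one-dimensional quadratic objective
`f(x) = (1/(2n)) ∑ a_i x²`: with i.i.d. uniform indices `ξ_t` and iteration
`x_{t+1} = (1 - η a_{ξ_t}) x_t`, one has `E[x_t] = (1 - ηa)^t x₀` and
`E[x_t²] = ((1 - ηa)² + η²s²)^t x₀²`, where `a` is the sharpness and `s²` the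
non-uniformity. -/
theorem sgd_sharpness_nonuniformity_moments
    (n : ℕ) (hn : 0 < n) (a : Fin n → ℝ) (ha : ∀ i, 0 ≤ a i)
    (η : ℝ) (hη : 0 < η) (x₀ : ℝ)
    {Ω : Type*} [MeasurableSpace Ω] (Q : Measure Ω) [IsProbabilityMeasure Q]
    (ξ : ℕ → Ω → Fin n) (hξmeas : ∀ t, Measurable (ξ t))
    (hindep : iIndepFun ξ Q)
    (hunif : ∀ t, Measure.map (ξ t) Q =
      (@PMF.uniformOfFintype (Fin n) _ ⟨⟨0, hn⟩⟩).toMeasure)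
    (x : ℕ → Ω → ℝ)
    (hx0 : ∀ ω, x 0 ω = x₀)
    (hxrec : ∀ t ω, x (t + 1) ω = (1 - η * a (ξ t ω)) * x t ω) :
    ∀ t : ℕ,
      (∫ ω, x t ω ∂Q) = (1 - η * ((1 / n : ℝ) * ∑ i, a i)) ^ t * x₀ ∧
      (∫ ω, (x t ω) ^ 2 ∂Q)
        = ((1 - η * ((1 / n : ℝ) * ∑ i, a i)) ^ 2
            + η ^ 2 * ((1 / n : ℝ) * ∑ i, (a i) ^ 2
                - ((1 / n : ℝ) * ∑ i, a i) ^ 2)) ^ t * x₀ ^ 2 :=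
  sgd_sharpness_nonuniformity_moments_general n hn a η x₀ Q ξ hξmeas hindep hunif x hx0 hxrec
end

section
/- Let σ : ℝ → ℝ be continuous and sigmoidal, i.e. lim_{z→−∞} σ(z) = 0 and lim_{z→+∞} σ(z) = 1. Then for every continuous function f : [0,1]^d → ℝ and every ε > 0, there exist m ∈ ℕ, coefficients a₁,…,a_m ∈ ℝ, vectors w₁,…,w_m ∈ ℝ^d and biases c₁,…,c_m ∈ ℝ such that sup_{x ∈ [0,1]^d} | f(x) − Σ_{j=1}^m a_j σ(w_jᵀ x + c_j) | < ε. -/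
open Filter Finset

set_option maxHeartbeats 1600000

/-- If all terms of a sum over `range N` are nonneg, bounded by `B`, and at most one
exceeds `τ`, then the sum is at most `B + N * τ`. -/
lemma cyb_sum_bound {N : ℕ} (f : ℕ → ℝ) (B τ : ℝ) (hB : 0 ≤ B) (hτ : 0 ≤ τ)
    (hfB : ∀ i ∈ range N, f i ≤ B)
    (huniq : ∀ i ∈ range N, ∀ j ∈ range N, τ < f i → τ < f j → i = j) :
    ∑ i ∈ range N, f i ≤ B + N * τ := by
  by_cases h : ∃ i ∈ range N, τ < f i
  · obtain ⟨i₀, hi₀, hτi₀⟩ := h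
    rw [← Finset.add_sum_erase _ f hi₀]
    have h1 : ∑ i ∈ (range N).erase i₀, f i ≤ ∑ i ∈ (range N).erase i₀, τ := by
      refine Finset.sum_le_sum fun j hj => ?_
      by_contra hc
      exact (Finset.mem_erase.mp hj).1
        (huniq j (Finset.mem_erase.mp hj).2 i₀ hi₀ (lt_of_not_ge hc) hτi₀)
    have h2 : ∑ i ∈ (range N).erase i₀, τ ≤ N * τ := by
      rw [Finset.sum_const, nsmul_eq_mul]
      have := Finset.card_erase_le (a := i₀) (s := range N)
      rw [Finset.card_range] at this
      exact mul_le_mul_of_nonneg_right (by exact_mod_cast this) hτ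
    have := hfB i₀ hi₀
    linarith
  · push_neg at h
    calc ∑ i ∈ range N, f i ≤ ∑ i ∈ range N, τ := Finset.sum_le_sum h
    _ = N * τ := by rw [Finset.sum_const, nsmul_eq_mul, Finset.card_range]
    _ ≤ B + N * τ := by linarith

/-- A continuous function with limits at `±∞` is bounded. -/
lemma cyb_bounded (σ : ℝ → ℝ) (hσcont : Continuous σ)
    (hσ0 : Tendsto σ atBot (nhds 0)) (hσ1 : Tendsto σ atTop (nhds 1)) :
    ∃ M : ℝ, 0 ≤ M ∧ ∀ t, |σ t| ≤ M := by
  obtain ⟨T2, hT2⟩ := eventually_atTop.mp (Metric.tendsto_nhds.mp hσ1 1 one_pos)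
  obtain ⟨T1, hT1⟩ := eventually_atBot.mp (Metric.tendsto_nhds.mp hσ0 1 one_pos)
  obtain ⟨C, hC⟩ := (isCompact_Icc (a := min T1 T2) (b := max T1 T2)).exists_bound_of_continuousOn
    hσcont.continuousOn
  refine ⟨max C 2, le_trans (by norm_num) (le_max_right _ _), fun t => ?_⟩
  rcases le_or_gt t T1 with h | h
  · have := hT1 t h
    rw [Real.dist_eq, sub_zero] at this
    exact le_trans this.le (le_trans (by norm_num) (le_max_right _ _))
  rcases le_or_gt T2 t with h' | h'
  · have := hT2 t h'
    rw [Real.dist_eq] at this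
    have : |σ t| ≤ 2 := by
      have := abs_sub_abs_le_abs_sub (σ t) 1
      rw [abs_one] at this
      linarith
    exact le_trans this (le_max_right _ _)
  · have : t ∈ Set.Icc (min T1 T2) (max T1 T2) :=
      ⟨le_trans (min_le_left _ _) h.le, le_trans h'.le (le_max_right _ _)⟩
    exact le_trans (hC t this) (le_max_left _ _)

/-- Tail bounds for a sigmoidal function. -/
lemma cyb_tails (σ : ℝ → ℝ)
    (hσ0 : Tendsto σ atBot (nhds 0)) (hσ1 : Tendsto σ atTop (nhds 1))
    (η : ℝ) (hη : 0 < η) :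
    ∃ T : ℝ, 0 ≤ T ∧ (∀ z, T ≤ z → |σ z - 1| ≤ η) ∧ (∀ z, z ≤ -T → |σ z| ≤ η) := by
  obtain ⟨T2, hT2⟩ := eventually_atTop.mp (Metric.tendsto_nhds.mp hσ1 η hη)
  obtain ⟨T1, hT1⟩ := eventually_atBot.mp (Metric.tendsto_nhds.mp hσ0 η hη)
  refine ⟨max 0 (max T2 (-T1)), le_max_left _ _, fun z hz => ?_, fun z hz => ?_⟩
  · have : T2 ≤ z := le_trans (le_trans (le_max_left _ _) (le_max_right _ _)) hz
    have := hT2 z this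
    rw [Real.dist_eq] at this
    exact this.le
  · have : z ≤ T1 := by
      have h1 : -T1 ≤ max 0 (max T2 (-T1)) := le_trans (le_max_right _ _) (le_max_right _ _)
      linarith [neg_le_neg h1, hz]
    have := hT1 z this
    rw [Real.dist_eq, sub_zero] at this
    exact this.le

/-- 1-D universal approximation for sigmoidal activations. -/
lemma cyb_onedim (σ : ℝ → ℝ) (hσcont : Continuous σ)
    (hσ0 : Tendsto σ atBot (nhds 0)) (hσ1 : Tendsto σ atTop (nhds 1))
    (g : ℝ → ℝ) (hg : Continuous g) (R ε : ℝ) (hε : 0 < ε) :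
    ∃ (m : ℕ) (a lam c : Fin m → ℝ), ∀ t ∈ Set.Icc (-R) R,
      |g t - ∑ jj, a jj * σ (lam jj * t + c jj)| < ε := by
  obtain ⟨M, hM0, hM⟩ := cyb_bounded σ hσcont hσ0 hσ1
  obtain ⟨R', hR'def⟩ : ∃ x : ℝ, x = |R| + 1 := ⟨_, rfl⟩
  have hR'pos : 0 < R' := by rw [hR'def]; positivity
  obtain ⟨ε₁, hε₁def⟩ : ∃ x : ℝ, x = ε / (2 * (M + 4)) := ⟨_, rfl⟩
  have hε₁ : 0 < ε₁ := by rw [hε₁def]; positivity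
  -- uniform continuity on a compact interval
  obtain ⟨δ, hδpos, hδ⟩ := Metric.uniformContinuousOn_iff.mp
    ((isCompact_Icc (a := -R'-1) (b := R'+1)).uniformContinuousOn_of_continuous
      hg.continuousOn) ε₁ hε₁
  obtain ⟨N, hNdef⟩ : ∃ n : ℕ, n = ⌈2 * R' / min δ 1⌉₊ + 1 := ⟨_, rfl⟩
  have hNpos : 0 < (N : ℝ) := by rw [hNdef]; positivity
  obtain ⟨h, hhdef⟩ : ∃ x : ℝ, x = 2 * R' / N := ⟨_, rfl⟩
  have hpos : 0 < h := by rw [hhdef]; exact div_pos (by linarith) hNpos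
  have hNh : (N : ℝ) * h = 2 * R' := by rw [hhdef]; field_simp
  have hminpos : 0 < min δ 1 := lt_min hδpos one_pos
  have hlt : h < min δ 1 := by
    rw [hhdef, div_lt_iff₀ hNpos]
    have h1 : 2 * R' / min δ 1 < N := by
      have := Nat.le_ceil (2 * R' / min δ 1)
      have h2 : (⌈2 * R' / min δ 1⌉₊ : ℝ) < N := by rw [hNdef]; exact_mod_cast Nat.lt_succ_self _
      linarith
    calc 2 * R' = (2 * R' / min δ 1) * min δ 1 := by field_simp
    _ < (N : ℝ) * min δ 1 := by
        exact mul_lt_mul_of_pos_right h1 hminpos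
    _ = min δ 1 * N := by ring
  have hδh : h < δ := lt_of_lt_of_le hlt (min_le_left _ _)
  have h1h : h ≤ 1 := le_of_lt (lt_of_lt_of_le hlt (min_le_right _ _))
  obtain ⟨p, hpdef⟩ : ∃ q : ℕ → ℝ, q = fun i : ℕ => -R' + (i : ℝ) * h := ⟨_, rfl⟩
  have hpsucc : ∀ i : ℕ, p (i + 1) = p i + h := by
    intro i; simp only [hpdef]; push_cast; ring
  have hpmono : StrictMono p := by
    intro i j hij
    simp only [hpdef]
    have : (i : ℝ) < j := by exact_mod_cast hij
    nlinarith
  have hp0 : p 0 = -R' := by simp [hpdef]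
  have hpN : p N = R' := by
    simp only [hpdef]; rw [hNh]; ring
  have hprange : ∀ i : ℕ, i ≤ N → p i ∈ Set.Icc (-R'-1) (R'+1) := by
    intro i hi
    have h1 : (0:ℝ) ≤ (i:ℝ) * h := by positivity
    have h2 : (i:ℝ) * h ≤ (N:ℝ) * h := by
      have : (i:ℝ) ≤ N := by exact_mod_cast hi
      nlinarith
    rw [hNh] at h2
    constructor <;> simp only [hpdef] <;> linarith
  obtain ⟨η, hηdef⟩ : ∃ x : ℝ, x = min (1 / (N : ℝ)) (ε₁ / (|g (-R')| + 1)) := ⟨_, rfl⟩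
  have hη : 0 < η := by
    rw [hηdef]
    exact lt_min (one_div_pos.mpr hNpos) (div_pos hε₁ (by positivity))
  obtain ⟨T, hT0, hTtop, hTbot⟩ := cyb_tails σ hσ0 hσ1 η hη
  obtain ⟨lam0, hlam0def⟩ : ∃ x : ℝ, x = 2 * T / h := ⟨_, rfl⟩
  have hlam0 : 0 ≤ lam0 := by rw [hlam0def]; exact div_nonneg (by linarith) hpos.le
  have hkey : lam0 * (h / 2) = T := by rw [hlam0def]; field_simp; try ring
  refine ⟨N + 1, Fin.cases (g (-R')) (fun i => g (p (i + 1)) - g (p i)),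
    Fin.cases 0 (fun _ => lam0), Fin.cases T (fun i => -(lam0 * p (i + 1))),
    fun t ht => ?_⟩
  have htR' : t ∈ Set.Icc (-R') R' := by
    have h1 := le_abs_self R
    have h2 := neg_abs_le R
    have h3 := ht.1
    have h4 := ht.2
    rw [hR'def]
    exact ⟨by linarith, by linarith⟩
  have htJ : t ∈ Set.Icc (-R'-1) (R'+1) :=
    ⟨by linarith [htR'.1], by linarith [htR'.2]⟩
  obtain ⟨j, hjdef⟩ : ∃ n : ℕ, n = ⌊(t + R') / h⌋₊ := ⟨_, rfl⟩
  have h0le : 0 ≤ (t + R') / h := div_nonneg (by linarith [htR'.1]) hpos.le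
  have hpj_le : p j ≤ t := by
    have h1 : (j : ℝ) ≤ (t + R') / h := hjdef ▸ Nat.floor_le h0le
    rw [le_div_iff₀ hpos] at h1
    simp only [hpdef]; linarith
  have hlt_pj1 : t < p (j + 1) := by
    have h1 : (t + R') / h < (j : ℝ) + 1 := by rw [hjdef]; exact Nat.lt_floor_add_one _
    rw [div_lt_iff₀ hpos] at h1
    simp only [hpdef]; push_cast; nlinarith
  have hjN : j ≤ N := by
    have h1 : (t + R') / h ≤ (N : ℝ) := by
      rw [div_le_iff₀ hpos, hNh]; linarith [htR'.2]
    calc j = ⌊(t + R') / h⌋₊ := hjdef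
    _ ≤ ⌊(N : ℝ)⌋₊ := Nat.floor_le_floor h1
    _ = N := Nat.floor_natCast N
  -- network value
  have hnet : ∑ jj : Fin (N + 1),
      (Fin.cases (motive := fun _ => ℝ) (g (-R')) (fun i => g (p (i + 1)) - g (p i)) jj) *
        σ ((Fin.cases (motive := fun _ => ℝ) 0 (fun _ => lam0) jj) * t +
          (Fin.cases (motive := fun _ => ℝ) T (fun i => -(lam0 * p (i + 1))) jj))
      = g (-R') * σ T + ∑ i ∈ range N,
          (g (p (i + 1)) - g (p i)) * σ (lam0 * (t - p (i + 1))) := by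
    rw [Fin.sum_univ_succ]
    simp only [Fin.cases_zero, Fin.cases_succ]
    congr 1
    · rw [zero_mul, zero_add]
    · rw [Finset.sum_range]
      apply Finset.sum_congr rfl
      intro i _
      congr 1
      ring
  -- step function identity
  have hstep : ∑ i ∈ range N, (g (p (i + 1)) - g (p i)) * (if i < j then (1:ℝ) else 0)
      = g (p j) - g (-R') := by
    have e1 : ∀ i ∈ range N, (g (p (i + 1)) - g (p i)) * (if i < j then (1:ℝ) else 0)
        = if i < j then g (p (i + 1)) - g (p i) else 0 := by
      intro i _; split <;> simp
    rw [Finset.sum_congr rfl e1,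
      ← Finset.sum_subset (Finset.range_subset_range.mpr hjN)
        (fun x _ hx => if_neg (by simpa using hx)),
      Finset.sum_congr rfl (fun i hi => if_pos (Finset.mem_range.mp hi)),
      Finset.sum_range_sub (fun i => g (p i)) j, hp0]
  obtain ⟨err, herrdef⟩ : ∃ q : ℕ → ℝ,
      q = fun i => |(if i < j then (1:ℝ) else 0) - σ (lam0 * (t - p (i + 1)))| := ⟨_, rfl⟩
  have herr0 : ∀ i, 0 ≤ err i := by intro i; simp only [herrdef]; positivity
  -- decomposition
  have hdecomp : g t - (g (-R') * σ T + ∑ i ∈ range N,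
      (g (p (i + 1)) - g (p i)) * σ (lam0 * (t - p (i + 1))))
      = (g t - g (p j)) + g (-R') * (1 - σ T)
        + ∑ i ∈ range N, (g (p (i + 1)) - g (p i)) *
            ((if i < j then (1:ℝ) else 0) - σ (lam0 * (t - p (i + 1)))) := by
    simp only [mul_sub]
    rw [Finset.sum_sub_distrib, hstep]
    ring
  -- bound A
  have hA : |g t - g (p j)| ≤ ε₁ := by
    have hd : dist t (p j) < δ := by
      rw [Real.dist_eq, abs_lt]
      have := hpsucc j
      constructor <;> nlinarith [hpj_le, hlt_pj1, hδh]
    exact (hδ t htJ (p j) (hprange j hjN) hd).le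
  -- bound B
  have hB : |g (-R')| * |1 - σ T| ≤ ε₁ := by
    have h1 : |1 - σ T| ≤ η := by rw [abs_sub_comm]; exact hTtop T le_rfl
    have h2 : η ≤ ε₁ / (|g (-R')| + 1) := by rw [hηdef]; exact min_le_right _ _
    have h3 : (0:ℝ) ≤ |g (-R')| := abs_nonneg _
    calc |g (-R')| * |1 - σ T| ≤ |g (-R')| * (ε₁ / (|g (-R')| + 1)) :=
          mul_le_mul_of_nonneg_left (le_trans h1 h2) h3
    _ ≤ ε₁ := by
        rw [mul_div_assoc']
        rw [div_le_iff₀ (by positivity)]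
        nlinarith
  -- jumps are small
  have hjump : ∀ i ∈ range N, |g (p (i + 1)) - g (p i)| ≤ ε₁ := by
    intro i hi
    have hiN : i + 1 ≤ N := Finset.mem_range.mp hi
    have hd : dist (p (i + 1)) (p i) < δ := by
      rw [Real.dist_eq, hpsucc i]
      rw [abs_lt]; constructor <;> nlinarith
    exact (hδ (p (i + 1)) (hprange _ hiN) (p i) (hprange _ (le_trans (Nat.le_succ i) hiN)) hd).le
  -- far indices have small error
  have hfar : ∀ i ∈ range N, h / 2 ≤ |t - p (i + 1)| → err i ≤ η := by
    intro i hi hfari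
    rcases le_total (p (i + 1)) t with hle | hle
    · have habs : t - p (i + 1) = |t - p (i + 1)| := (abs_of_nonneg (by linarith)).symm
      have hz : T ≤ lam0 * (t - p (i + 1)) := by
        rw [← hkey]
        apply mul_le_mul_of_nonneg_left _ hlam0
        rw [habs]; exact hfari
      have hij : i < j := by
        have hpp : p (i + 1) < p (j + 1) := lt_of_le_of_lt hle hlt_pj1
        have := hpmono.lt_iff_lt.mp hpp
        omega
      simp only [herrdef, if_pos hij]
      rw [abs_sub_comm]
      exact hTtop _ hz
    · have habs : h / 2 ≤ p (i + 1) - t := by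
        rw [abs_sub_comm] at hfari
        rwa [abs_of_nonneg (by linarith)] at hfari
      have hz : lam0 * (t - p (i + 1)) ≤ -T := by
        have : lam0 * (h / 2) ≤ lam0 * (p (i + 1) - t) :=
          mul_le_mul_of_nonneg_left habs hlam0
        rw [hkey] at this
        nlinarith
      have hij : ¬ i < j := by
        intro hij
        have hlt2 : t < p (i + 1) := by
          have h2 : (0:ℝ) < h / 2 := by positivity
          linarith
        have hpp : p j < p (i + 1) := lt_of_le_of_lt hpj_le hlt2
        have := hpmono.lt_iff_lt.mp hpp
        omega
      simp only [herrdef, if_neg hij, zero_sub, abs_neg]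
      exact hTbot _ hz
  -- at most one near index
  have huniq : ∀ i ∈ range N, ∀ i' ∈ range N, η < err i → η < err i' → i = i' := by
    intro i hi i' hi' hei hei'
    by_contra hne
    have hni : |t - p (i + 1)| < h / 2 := by
      by_contra hc; push_neg at hc
      exact absurd (hfar i hi hc) (not_le.mpr hei)
    have hni' : |t - p (i' + 1)| < h / 2 := by
      by_contra hc; push_neg at hc
      exact absurd (hfar i' hi' hc) (not_le.mpr hei')
    have hdiff : p (i + 1) - p (i' + 1) = ((i : ℝ) - i') * h := by
      simp only [hpdef]; push_cast; ring
    have hone : (1 : ℝ) ≤ |(i : ℝ) - i'| := by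
      have hz : ((i : ℤ) - i') ≠ 0 := sub_ne_zero.mpr (by exact_mod_cast hne)
      have := Int.one_le_abs hz
      have h2 : (1:ℝ) ≤ |(((i : ℤ) - i' : ℤ) : ℝ)| := by
        rw [← Int.cast_abs]; exact_mod_cast this
      push_cast at h2
      exact h2
    have : h ≤ |p (i + 1) - p (i' + 1)| := by
      rw [hdiff, abs_mul, abs_of_pos hpos]
      nlinarith
    have htri : |p (i + 1) - p (i' + 1)| ≤ |t - p (i + 1)| + |t - p (i' + 1)| := by
      have := abs_sub_abs_le_abs_sub (t - p (i' + 1)) (t - p (i + 1))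
      calc |p (i + 1) - p (i' + 1)| = |(t - p (i' + 1)) - (t - p (i + 1))| := by ring_nf
      _ ≤ |t - p (i' + 1)| + |t - p (i + 1)| := abs_sub _ _
      _ = |t - p (i + 1)| + |t - p (i' + 1)| := by ring
    linarith
  -- error bound per term and total
  have herrB : ∀ i ∈ range N, err i ≤ M + 1 := by
    intro i _
    simp only [herrdef]
    calc |(if i < j then (1:ℝ) else 0) - σ (lam0 * (t - p (i + 1)))|
        ≤ |(if i < j then (1:ℝ) else 0)| + |σ (lam0 * (t - p (i + 1)))| := abs_sub _ _
    _ ≤ 1 + M := by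
        gcongr
        · split <;> simp
        · exact hM _
    _ = M + 1 := by ring
  have hsumerr : ∑ i ∈ range N, err i ≤ M + 2 := by
    have := cyb_sum_bound err (M + 1) η (by linarith) hη.le herrB huniq
    have hNη : (N : ℝ) * η ≤ 1 := by
      have h1 : η ≤ 1 / N := by rw [hηdef]; exact min_le_left _ _
      calc (N:ℝ) * η ≤ (N:ℝ) * (1 / N) := mul_le_mul_of_nonneg_left h1 hNpos.le
      _ = 1 := by field_simp
    linarith
  have hC : ∑ i ∈ range N, |g (p (i + 1)) - g (p i)| * err i ≤ ε₁ * (M + 2) := by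
    calc ∑ i ∈ range N, |g (p (i + 1)) - g (p i)| * err i
        ≤ ∑ i ∈ range N, ε₁ * err i := by
          apply Finset.sum_le_sum
          intro i hi
          exact mul_le_mul_of_nonneg_right (hjump i hi) (herr0 i)
    _ = ε₁ * ∑ i ∈ range N, err i := by rw [Finset.mul_sum]
    _ ≤ ε₁ * (M + 2) := mul_le_mul_of_nonneg_left hsumerr hε₁.le
  -- final assembly
  rw [hnet, hdecomp]
  have htot : |(g t - g (p j)) + g (-R') * (1 - σ T)
      + ∑ i ∈ range N, (g (p (i + 1)) - g (p i)) *
          ((if i < j then (1:ℝ) else 0) - σ (lam0 * (t - p (i + 1))))|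
      ≤ ε₁ + ε₁ + ε₁ * (M + 2) := by
    calc |(g t - g (p j)) + g (-R') * (1 - σ T)
        + ∑ i ∈ range N, (g (p (i + 1)) - g (p i)) *
            ((if i < j then (1:ℝ) else 0) - σ (lam0 * (t - p (i + 1))))|
        ≤ |(g t - g (p j)) + g (-R') * (1 - σ T)|
          + |∑ i ∈ range N, (g (p (i + 1)) - g (p i)) *
              ((if i < j then (1:ℝ) else 0) - σ (lam0 * (t - p (i + 1))))| := abs_add_le _ _
    _ ≤ (|g t - g (p j)| + |g (-R') * (1 - σ T)|)
          + ∑ i ∈ range N, |g (p (i + 1)) - g (p i)| * err i := by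
        gcongr
        · exact abs_add_le _ _
        · calc |∑ i ∈ range N, (g (p (i + 1)) - g (p i)) *
              ((if i < j then (1:ℝ) else 0) - σ (lam0 * (t - p (i + 1))))|
              ≤ ∑ i ∈ range N, |(g (p (i + 1)) - g (p i)) *
                ((if i < j then (1:ℝ) else 0) - σ (lam0 * (t - p (i + 1))))| :=
                Finset.abs_sum_le_sum_abs _ _
          _ = ∑ i ∈ range N, |g (p (i + 1)) - g (p i)| * err i := by
              apply Finset.sum_congr rfl
              intro i _
              rw [abs_mul, herrdef]
    _ ≤ ε₁ + ε₁ + ε₁ * (M + 2) := by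
        rw [abs_mul] at *
        have := hA; have := hB; have := hC
        linarith
  have hfin : ε₁ + ε₁ + ε₁ * (M + 2) = ε / 2 := by
    rw [hε₁def]; field_simp; ring
  calc |(g t - g (p j)) + g (-R') * (1 - σ T)
      + ∑ i ∈ range N, (g (p (i + 1)) - g (p i)) *
          ((if i < j then (1:ℝ) else 0) - σ (lam0 * (t - p (i + 1))))|
      ≤ ε₁ + ε₁ + ε₁ * (M + 2) := htot
  _ = ε / 2 := hfin
  _ < ε := by linarith

/-- Ridge approximation: `g (w ⬝ x)` is approximable on the cube by elements of the
span of ridge sigmoids. -/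
lemma cyb_ridge (σ : ℝ → ℝ) (hσcont : Continuous σ)
    (hσ0 : Tendsto σ atBot (nhds 0)) (hσ1 : Tendsto σ atTop (nhds 1))
    (d : ℕ) (w : Fin d → ℝ) (g : ℝ → ℝ) (hg : Continuous g) (ε : ℝ) (hε : 0 < ε) :
    ∃ F ∈ Submodule.span ℝ
        {F : (Fin d → ℝ) → ℝ | ∃ (w' : Fin d → ℝ) (c' : ℝ), F = fun x => σ ((∑ i, w' i * x i) + c')},
      ∀ x ∈ Set.Icc (0 : Fin d → ℝ) 1, |g (∑ i, w i * x i) - F x| < ε := by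
  obtain ⟨m, a, lam, c, hap⟩ := cyb_onedim σ hσcont hσ0 hσ1 g hg (∑ i, |w i|) ε hε
  refine ⟨fun x : Fin d → ℝ => ∑ j, a j * σ (lam j * (∑ i, w i * x i) + c j), ?_, ?_⟩
  · have hFeq : (fun x : Fin d → ℝ => ∑ j, a j * σ (lam j * (∑ i, w i * x i) + c j))
        = ∑ j : Fin m, a j • (fun x : Fin d → ℝ => σ ((∑ i, (lam j * w i) * x i) + c j)) := by
      funext x
      rw [Finset.sum_apply]
      apply Finset.sum_congr rfl
      intro jj _
      rw [Pi.smul_apply, smul_eq_mul]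
      congr 2
      rw [Finset.mul_sum]
      congr 1
      apply Finset.sum_congr rfl
      intro i _
      ring
    rw [hFeq]
    exact Submodule.sum_mem _ fun j _ => Submodule.smul_mem _ _
      (Submodule.subset_span ⟨fun i => lam j * w i, c j, rfl⟩)
  · intro x hx
    apply hap
    rw [Set.mem_Icc] at hx
    have habs : |∑ i, w i * x i| ≤ ∑ i, |w i| := by
      calc |∑ i, w i * x i| ≤ ∑ i, |w i * x i| := Finset.abs_sum_le_sum_abs _ _
      _ ≤ ∑ i, |w i| := by
          apply Finset.sum_le_sum
          intro i _
          rw [abs_mul]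
          have h0 : 0 ≤ x i := hx.1 i
          have h1 : x i ≤ 1 := hx.2 i
          have : |x i| ≤ 1 := abs_le.mpr ⟨by linarith, h1⟩
          calc |w i| * |x i| ≤ |w i| * 1 := mul_le_mul_of_nonneg_left this (abs_nonneg _)
          _ = |w i| := mul_one _
    exact Set.mem_Icc.mpr (abs_le.mp habs)

/-- Stone–Weierstrass step: `f` is approximable on the cube by finite combinations of
exponentials of linear functionals. -/
lemma cyb_sw (d : ℕ) (f : (Fin d → ℝ) → ℝ)
    (hf : ContinuousOn f (Set.Icc (0 : Fin d → ℝ) 1)) (ε : ℝ) (hε : 0 < ε) :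
    ∃ (n : ℕ) (b : Fin n → ℝ) (ws : Fin n → (Fin d → ℝ)),
      ∀ x ∈ Set.Icc (0 : Fin d → ℝ) 1,
        |f x - ∑ k, b k * Real.exp (∑ i, ws k i * x i)| < ε := by
  set X := ↥(Set.Icc (0 : Fin d → ℝ) 1)
  have he : ∀ w : Fin d → ℝ, Continuous (fun x : X => Real.exp (∑ i, w i * (x : Fin d → ℝ) i)) := by
    intro w
    exact Real.continuous_exp.comp (continuous_finset_sum Finset.univ fun i _ =>
      continuous_const.mul ((continuous_apply i).comp continuous_subtype_val))
  set e : (Fin d → ℝ) → C(X, ℝ) := fun w => ⟨_, he w⟩ with hedef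
  have heval : ∀ w (x : X), e w x = Real.exp (∑ i, w i * (x : Fin d → ℝ) i) := fun _ _ => rfl
  set A : Subalgebra ℝ C(X, ℝ) := Algebra.adjoin ℝ (Set.range e) with hAdef
  have hsep : A.SeparatesPoints := by
    intro x y hxy
    obtain ⟨i, hi⟩ : ∃ i, (x : Fin d → ℝ) i ≠ (y : Fin d → ℝ) i := by
      by_contra hc; push_neg at hc; exact hxy (Subtype.ext (funext hc))
    have hmemA : e (Pi.single i 1) ∈ A := Algebra.subset_adjoin (Set.mem_range_self _)
    refine ⟨⇑(e (Pi.single i 1)), ⟨e (Pi.single i 1), hmemA, rfl⟩, ?_⟩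
    have hv : ∀ z : X, e (Pi.single i 1) z = Real.exp ((z : Fin d → ℝ) i) := by
      intro z
      rw [heval]
      congr 1
      have hterm : ∀ k, (Pi.single i 1 : Fin d → ℝ) k * (z : Fin d → ℝ) k
          = if k = i then (z : Fin d → ℝ) k else 0 := by
        intro k
        rcases eq_or_ne k i with rfl | hk
        · simp
        · simp [Pi.single_eq_of_ne hk, if_neg hk]
      rw [Finset.sum_congr rfl fun k _ => hterm k,
        Finset.sum_ite_eq' Finset.univ i fun k => (z : Fin d → ℝ) k]
      simp
    rw [hv, hv]
    exact fun hcon => hi (Real.exp_injective hcon)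
  have hone : (1 : C(X, ℝ)) ∈ Set.range e := by
    refine ⟨0, ?_⟩
    ext z
    simp [heval]
  have hmul : ∀ F ∈ Set.range e, ∀ G ∈ Set.range e, F * G ∈ Set.range e := by
    rintro F ⟨w, rfl⟩ G ⟨v, rfl⟩
    refine ⟨w + v, ?_⟩
    ext z
    simp only [ContinuousMap.mul_apply, heval]
    rw [← Real.exp_add, ← Finset.sum_add_distrib]
    congr 1
    apply Finset.sum_congr rfl
    intro i _
    simp [add_mul]
  have hsub : (↑(Submonoid.closure (Set.range e)) : Set C(X, ℝ))
      ⊆ ↑(Submodule.span ℝ (Set.range e)) := by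
    have hle : Submonoid.closure (Set.range e) ≤
        ⟨⟨Set.range e, fun ha hb => hmul _ ha _ hb⟩, hone⟩ :=
      Submonoid.closure_le.mpr (le_refl _)
    intro z hz
    exact Submodule.subset_span (hle hz)
  have hspan : Subalgebra.toSubmodule A = Submodule.span ℝ (Set.range e) :=
    Algebra.adjoin_eq_span_of_subset ℝ hsub
  obtain ⟨gA, hgA⟩ := ContinuousMap.exists_mem_subalgebra_near_continuous_of_separatesPoints
    A hsep ((Set.Icc (0 : Fin d → ℝ) 1).restrict f) hf.restrict ε hε
  have hmem : (↑gA : C(X, ℝ)) ∈ Submodule.span ℝ (Set.range e) := by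
    rw [← hspan]
    exact (Subalgebra.mem_toSubmodule A).mpr gA.2
  obtain ⟨n, b, v, hsum⟩ := Submodule.mem_span_set'.mp hmem
  have hws : ∀ k : Fin n, ∃ w, e w = (v k : C(X, ℝ)) := fun k => (v k).property
  choose ws hwseq using hws
  refine ⟨n, b, ws, fun x hx => ?_⟩
  have hval : (↑gA : C(X, ℝ)) ⟨x, hx⟩ = ∑ k, b k * Real.exp (∑ i, ws k i * x i) := by
    rw [← hsum]
    have hcoe : ((∑ k, b k • (v k : C(X, ℝ))) : C(X, ℝ)) ⟨x, hx⟩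
        = ∑ k, b k * ((v k : C(X, ℝ)) ⟨x, hx⟩) := by
      simp
    rw [hcoe]
    apply Finset.sum_congr rfl
    intro k _
    rw [← hwseq k]
    rfl
  have := hgA ⟨x, hx⟩
  rw [Real.norm_eq_abs] at this
  rw [abs_sub_comm] at this
  have hres : (Set.Icc (0 : Fin d → ℝ) 1).restrict f ⟨x, hx⟩ = f x := rfl
  rw [hres, hval] at this
  exact this

/-- Cybenko's universal approximation theorem: if `σ : ℝ → ℝ` is continuous and sigmoidal
(`σ(z) → 0` as `z → -∞` and `σ(z) → 1` as `z → +∞`), then finite two-layer networks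
`x ↦ ∑_j a_j σ(w_jᵀ x + c_j)` are dense in `C([0,1]^d)` with the uniform norm. -/
theorem universal_approximation_sigmoidal
    (σ : ℝ → ℝ) (hσcont : Continuous σ)
    (hσ0 : Filter.Tendsto σ Filter.atBot (nhds 0))
    (hσ1 : Filter.Tendsto σ Filter.atTop (nhds 1))
    (d : ℕ) (f : (Fin d → ℝ) → ℝ)
    (hf : ContinuousOn f (Set.Icc (0 : Fin d → ℝ) 1))
    (ε : ℝ) (hε : 0 < ε) :
    ∃ (m : ℕ) (a : Fin m → ℝ) (w : Fin m → (Fin d → ℝ)) (c : Fin m → ℝ),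
      ∀ x ∈ Set.Icc (0 : Fin d → ℝ) 1,
        |f x - ∑ j, a j * σ ((∑ i, w j i * x i) + c j)| < ε := by
  obtain ⟨n, b, ws, hsw⟩ := cyb_sw d f hf (ε / 2) (by positivity)
  have hεk : ∀ k : Fin n, (0:ℝ) < ε / (2 * (n + 1) * (|b k| + 1)) := by
    intro k; positivity
  choose F hFmem hFap using fun k : Fin n =>
    cyb_ridge σ hσcont hσ0 hσ1 d (ws k) Real.exp Real.continuous_exp
      (ε / (2 * (n + 1) * (|b k| + 1))) (hεk k)
  obtain ⟨G, hGdef⟩ : ∃ G : (Fin d → ℝ) → ℝ, G = ∑ k : Fin n, b k • F k := ⟨_, rfl⟩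
  have hGmem : G ∈ Submodule.span ℝ
      {F : (Fin d → ℝ) → ℝ | ∃ (w' : Fin d → ℝ) (c' : ℝ),
        F = fun x => σ ((∑ i, w' i * x i) + c')} := by
    rw [hGdef]
    exact Submodule.sum_mem _ fun k _ => Submodule.smul_mem _ _ (hFmem k)
  have hGerr : ∀ x ∈ Set.Icc (0 : Fin d → ℝ) 1, |f x - G x| < ε := by
    intro x hx
    have h1 := hsw x hx
    have hGx : G x = ∑ k, b k * F k x := by
      rw [hGdef, Finset.sum_apply]
      apply Finset.sum_congr rfl
      intro k _
      rw [Pi.smul_apply, smul_eq_mul]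
    have h2 : |∑ k, b k * Real.exp (∑ i, ws k i * x i) - G x|
        ≤ ∑ k : Fin n, |b k| * (ε / (2 * (n + 1) * (|b k| + 1))) := by
      rw [hGx]
      calc |∑ k, b k * Real.exp (∑ i, ws k i * x i) - ∑ k, b k * F k x|
          = |∑ k : Fin n, b k * (Real.exp (∑ i, ws k i * x i) - F k x)| := by
            rw [← Finset.sum_sub_distrib]
            congr 1
            apply Finset.sum_congr rfl
            intro k _
            ring
      _ ≤ ∑ k : Fin n, |b k * (Real.exp (∑ i, ws k i * x i) - F k x)| :=
            Finset.abs_sum_le_sum_abs _ _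
      _ ≤ ∑ k : Fin n, |b k| * (ε / (2 * (n + 1) * (|b k| + 1))) := by
            apply Finset.sum_le_sum
            intro k _
            rw [abs_mul]
            exact mul_le_mul_of_nonneg_left (hFap k x hx).le (abs_nonneg _)
    have h3 : ∑ k : Fin n, |b k| * (ε / (2 * (n + 1) * (|b k| + 1))) ≤ ε / 2 := by
      calc ∑ k : Fin n, |b k| * (ε / (2 * (n + 1) * (|b k| + 1)))
          ≤ ∑ k : Fin n, ε / (2 * (n + 1)) := by
            apply Finset.sum_le_sum
            intro k _
            have hbk : (0:ℝ) < |b k| + 1 := by positivity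
            have heq : |b k| * (ε / (2 * (↑n + 1) * (|b k| + 1)))
                = (ε / (2 * ((n:ℝ) + 1))) * (|b k| / (|b k| + 1)) := by
              field_simp
            rw [heq]
            have hle1 : |b k| / (|b k| + 1) ≤ 1 := by
              rw [div_le_one hbk]; linarith [abs_nonneg (b k)]
            exact mul_le_of_le_one_right (by positivity) hle1
      _ = n * (ε / (2 * (n + 1))) := by rw [Finset.sum_const, Finset.card_univ,
            Fintype.card_fin, nsmul_eq_mul]
      _ ≤ ε / 2 := by
            rw [mul_div_assoc']
            rw [div_le_div_iff₀ (by positivity) (by norm_num)]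
            have hn : (0:ℝ) ≤ n := Nat.cast_nonneg n
            nlinarith [hε]
    calc |f x - G x| ≤ |f x - ∑ k, b k * Real.exp (∑ i, ws k i * x i)|
          + |∑ k, b k * Real.exp (∑ i, ws k i * x i) - G x| := abs_sub_le _ _ _
    _ < ε / 2 + ε / 2 := by
        apply add_lt_add_of_lt_of_le h1 (le_trans h2 h3)
    _ = ε := by ring
  obtain ⟨m, aa, vv, hvv⟩ := Submodule.mem_span_set'.mp hGmem
  have hwc : ∀ j : Fin m, ∃ (w' : Fin d → ℝ) (c' : ℝ),
      (vv j : (Fin d → ℝ) → ℝ) = fun x => σ ((∑ i, w' i * x i) + c') := fun j => (vv j).property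
  choose wj cj hwj using hwc
  refine ⟨m, aa, wj, cj, fun x hx => ?_⟩
  have hGx : ∑ j, aa j * σ ((∑ i, wj j i * x i) + cj j) = G x := by
    rw [← hvv, Finset.sum_apply]
    apply Finset.sum_congr rfl
    intro j _
    rw [Pi.smul_apply, smul_eq_mul, hwj j]
  rw [hGx]
  exact hGerr x hx
end
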